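/- arXiv:2402.15703 — 5 statements merged into one kernel-verified Lean document; each statement's English description precedes it below -/
import Mathlib

section
/- With probability at least 1−2δ, the value of the TRUST policy satisfies the data-dependent lower bound V^{π_TRUST} ≥ π_TRUSTᵀ r̂ − G(⌈ε̂*⌉) − sqrt(2 log(1/δ) / (Σ_{j=1}^d N_j/σ_j²)). -/
open MeasureTheory ProbabilityTheory Real Finset
open scoped NNReal ENNReal


lemma gauss_pdf_mul_exp (v : ℝ≥0) (hv : 0 < (v : ℝ)) (s x : ℝ) :
    gaussianPDFReal 0 v x * rexp (s * x)
      = rexp ((v : ℝ) * s ^ 2 / 2) * gaussianPDFReal (s * v) v x := by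
  unfold gaussianPDFReal
  have hexp : rexp (-(x - 0) ^ 2 / (2 * v)) * rexp (s * x)
      = rexp ((v : ℝ) * s ^ 2 / 2) * rexp (-(x - s * v) ^ 2 / (2 * v)) := by
    rw [← Real.exp_add, ← Real.exp_add]
    congr 1
    field_simp
    ring
  calc (√(2 * π * v))⁻¹ * rexp (-(x - 0) ^ 2 / (2 * v)) * rexp (s * x)
      = (√(2 * π * v))⁻¹ * (rexp (-(x - 0) ^ 2 / (2 * v)) * rexp (s * x)) := by ring
    _ = (√(2 * π * v))⁻¹ * (rexp ((v : ℝ) * s ^ 2 / 2) * rexp (-(x - s * v) ^ 2 / (2 * v))) := by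
        rw [hexp]
    _ = rexp ((v : ℝ) * s ^ 2 / 2) * ((√(2 * π * v))⁻¹ * rexp (-(x - s * v) ^ 2 / (2 * v))) := by
        ring

lemma gauss_exp_integrable_and_integral
    {Ω : Type*} [MeasurableSpace Ω] (P : Measure Ω) [IsProbabilityMeasure P]
    (X : Ω → ℝ) (hX : Measurable X) (v : ℝ≥0) (hv : 0 < (v : ℝ))
    (h : Measure.map X P = gaussianReal 0 v) (s : ℝ) :
    Integrable (fun ω => rexp (s * X ω)) P
      ∧ ∫ ω, rexp (s * X ω) ∂P = rexp ((v : ℝ) * s ^ 2 / 2) := by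
  have hv0 : v ≠ 0 := by
    intro hh; rw [hh] at hv; simp at hv
  have hg : Measurable fun x => (gaussianPDFReal 0 v x).toNNReal :=
    measurable_real_toNNReal.comp (measurable_gaussianPDFReal 0 v)
  have h' : Measure.map X P
      = volume.withDensity (fun x => ((gaussianPDFReal 0 v x).toNNReal : ℝ≥0∞)) := by
    rw [h, gaussianReal_of_var_ne_zero _ hv0]; rfl
  have hkey : ∀ x, gaussianPDFReal 0 v x * rexp (s * x)
      = rexp ((v : ℝ) * s ^ 2 / 2) * gaussianPDFReal (s * v) v x :=
    fun x => gauss_pdf_mul_exp v hv s x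
  have hpdf_int : Integrable (fun x => gaussianPDFReal 0 v x * rexp (s * x)) volume := by
    simp_rw [hkey]
    exact (integrable_gaussianPDFReal (s * v) v).const_mul _
  have hsmul : ∀ x : ℝ, (gaussianPDFReal 0 v x).toNNReal • rexp (s * x)
      = gaussianPDFReal 0 v x * rexp (s * x) := by
    intro x
    rw [NNReal.smul_def, Real.coe_toNNReal _ (gaussianPDFReal_nonneg 0 v x)]
    rfl
  have hmeasf : AEStronglyMeasurable (fun x : ℝ => rexp (s * x)) (Measure.map X P) :=
    ((measurable_id.const_mul s).exp).aestronglyMeasurable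
  have hInt1 : Integrable (fun x => rexp (s * x)) (Measure.map X P) := by
    rw [h', integrable_withDensity_iff_integrable_smul hg]
    exact hpdf_int.congr (Filter.Eventually.of_forall fun x => (hsmul x).symm)
  constructor
  · exact (integrable_map_measure hmeasf hX.aemeasurable).mp hInt1
  · rw [← integral_map hX.aemeasurable hmeasf, h',
      integral_withDensity_eq_integral_smul hg]
    simp_rw [hsmul, hkey]
    rw [integral_const_mul, integral_gaussianPDFReal_eq_one _ hv0, mul_one]

lemma gauss_weighted_sum_tail
    {Ω : Type*} [MeasurableSpace Ω] (P : Measure Ω) [IsProbabilityMeasure P]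
    (d : ℕ) (c : Fin d → ℝ) (v : Fin d → ℝ≥0) (hv : ∀ i, 0 < (v i : ℝ))
    (η : Ω → Fin d → ℝ) (hηmeas : ∀ i, Measurable fun ω => η ω i)
    (hηind : iIndepFun (fun i ω => η ω i) P)
    (hηlaw : ∀ i, Measure.map (fun ω => η ω i) P = gaussianReal 0 (v i))
    (t0 lam : ℝ) (hlam : 0 ≤ lam) :
    (P {ω | t0 ≤ ∑ i, c i * η ω i}).toReal
      ≤ rexp (-lam * t0 + ∑ i, (v i : ℝ) * (lam * c i) ^ 2 / 2) := by
  set Y : Fin d → Ω → ℝ := fun i ω => c i * η ω i with hY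
  have hYmeas : ∀ i, Measurable (Y i) := fun i => (hηmeas i).const_mul _
  have hYind : iIndepFun Y P :=
    hηind.comp (fun i x => c i * x) (fun i => measurable_const_mul _)
  have hint : ∀ i, Integrable (fun ω => rexp (lam * Y i ω)) P := by
    intro i
    have := (gauss_exp_integrable_and_integral P _ (hηmeas i) (v i) (hv i) (hηlaw i)
      (lam * c i)).1
    simpa [hY, mul_assoc] using this
  have hmgf : ∀ i, mgf (Y i) P lam = rexp ((v i : ℝ) * (lam * c i) ^ 2 / 2) := by
    intro i
    have := (gauss_exp_integrable_and_integral P _ (hηmeas i) (v i) (hv i) (hηlaw i)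
      (lam * c i)).2
    simp only [mgf, hY]
    simpa [mul_assoc] using this
  have hset : {ω | t0 ≤ ∑ i, c i * η ω i} = {ω | t0 ≤ (∑ i, Y i) ω} := by
    ext ω; simp [hY, Finset.sum_apply]
  rw [hset]
  calc (P {ω | t0 ≤ (∑ i, Y i) ω}).toReal
      ≤ rexp (-lam * t0) * mgf (∑ i, Y i) P lam :=
        measure_ge_le_exp_mul_mgf t0 hlam
          (hYind.integrable_exp_mul_sum hYmeas (fun i _ => hint i))
    _ = rexp (-lam * t0) * ∏ i, rexp ((v i : ℝ) * (lam * c i) ^ 2 / 2) := by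
        rw [hYind.mgf_sum hYmeas]
        exact congrArg _ (Finset.prod_congr rfl fun i _ => hmgf i)
    _ = rexp (-lam * t0 + ∑ i, (v i : ℝ) * (lam * c i) ^ 2 / 2) := by
        rw [← Real.exp_sum, ← Real.exp_add]

/-- **Data-dependent lower bound on the value of the TRUST policy.**
With probability at least 1−2δ, the value V^{π_TRUST} = π_TRUSTᵀ r of the TRUST
policy is at least π_TRUSTᵀ r̂ − G(⌈ε̂*⌉) − sqrt(2 log(1/δ) / (Σ_j N_j/σ_j²)). -/
theorem trust_data_dependent_lower_bound
    {Ω : Type*} [MeasurableSpace Ω] (P : Measure Ω) [IsProbabilityMeasure P]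
    (d : ℕ) (hd : 0 < d)
    (N : Fin d → ℕ) (hN : ∀ i, 1 ≤ N i)
    (σ : Fin d → ℝ) (hσ : ∀ i, 0 < σ i)
    (r : Fin d → ℝ)
    -- the noise vector η has independent Gaussian coordinates, η_i ~ N(0, σ_i²/N_i)
    (η : Ω → Fin d → ℝ)
    (hηmeas : ∀ i, Measurable fun ω => η ω i)
    (hηind : iIndepFun (fun i ω => η ω i) P)
    (hηlaw : ∀ i, Measure.map (fun ω => η ω i) P
      = gaussianReal 0 (Real.toNNReal ((σ i) ^ 2 / (N i : ℝ))))
    -- the reference policy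
    (μhat : Fin d → ℝ)
    (hμhat : ∀ i, μhat i = ((N i : ℝ) / (σ i) ^ 2) / (∑ j, (N j : ℝ) / (σ j) ^ 2))
    -- the trust region
    (C : ℝ → Set (Fin d → ℝ))
    (hC : ∀ ε, C ε = {Δ | (∀ i, 0 ≤ Δ i + μhat i) ∧ (∑ i, (Δ i + μhat i)) = 1
      ∧ ∑ i, (Δ i) ^ 2 * (σ i) ^ 2 / (N i : ℝ) ≤ ε ^ 2})
    -- the largest radius
    (ε₀ : ℝ)
    (hε₀ : ε₀ = ⨆ i, Real.sqrt ((∑ j ∈ Finset.univ.erase i,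
        (μhat j) ^ 2 * (σ j) ^ 2 / (N j : ℝ)) + (1 - μhat i) ^ 2 * (σ i) ^ 2 / (N i : ℝ)))
    -- the finite candidate set of radii and the rounding ⌈·⌉ to the grid
    (E : Finset ℝ) (hE : ∀ ε ∈ E, 0 < ε ∧ ε ≤ ε₀) (hε₀E : ε₀ ∈ E)
    (ceil : ℝ → ℝ)
    (hceil : ∀ ε, 0 < ε → ε ≤ ε₀ →
      ceil ε ∈ E ∧ ε ≤ ceil ε ∧ ∀ ε' ∈ E, ε ≤ ε' → ceil ε ≤ ε')
    (δ : ℝ) (hδ : 0 < δ) (hδ1 : δ < 1)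
    -- G is a uniform-in-ε high probability bound on the supremum of the Gaussian process
    (G : ℝ → ℝ)
    (hG : ENNReal.ofReal (1 - δ) ≤
      P {ω | ∀ ε ∈ E, sSup ((fun Δ => ∑ i, Δ i * η ω i) '' C ε) ≤ G ε})
    -- TRUST: Δ̂_ε maximizes the empirical return Δᵀr̂ over C(ε), with r̂ = r + η
    (Δhat : Ω → ℝ → Fin d → ℝ)
    (hΔhat : ∀ ω, ∀ ε ∈ E, Δhat ω ε ∈ C ε ∧
      ∀ Δ ∈ C ε, ∑ i, Δ i * (r i + η ω i) ≤ ∑ i, Δhat ω ε i * (r i + η ω i))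
    -- ε̂* maximizes the penalized objective over the grid E
    (εhat : Ω → ℝ)
    (hεhat : ∀ ω, εhat ω ∈ E ∧ ∀ ε ∈ E,
      (∑ i, Δhat ω ε i * (r i + η ω i)) - G ε
        ≤ (∑ i, Δhat ω (εhat ω) i * (r i + η ω i)) - G (εhat ω)) :
    ENNReal.ofReal (1 - 2 * δ) ≤
      P {ω | ∑ i, (μhat i + Δhat ω (εhat ω) i) * (r i + η ω i)
          - G (ceil (εhat ω))
          - Real.sqrt (2 * Real.log (1 / δ) / (∑ j, (N j : ℝ) / (σ j) ^ 2))
        ≤ ∑ i, (μhat i + Δhat ω (εhat ω) i) * r i} := by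
  classical
  -- notation
  set S : ℝ := ∑ j, (N j : ℝ) / (σ j) ^ 2 with hSdef
  have hNpos : ∀ i, (0 : ℝ) < (N i : ℝ) := fun i => by
    exact_mod_cast Nat.lt_of_lt_of_le Nat.zero_lt_one (hN i)
  have hterm : ∀ i, (0 : ℝ) < (N i : ℝ) / (σ i) ^ 2 :=
    fun i => div_pos (hNpos i) (pow_pos (hσ i) 2)
  have hS : 0 < S := Finset.sum_pos (fun i _ => hterm i)
    (Finset.univ_nonempty_iff.mpr ⟨⟨0, hd⟩⟩)
  set t0 : ℝ := Real.sqrt (2 * Real.log (1 / δ) / S) with ht0def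
  have hlog : 0 ≤ Real.log (1 / δ) :=
    Real.log_nonneg (one_le_one_div hδ hδ1.le)
  have ht0 : 0 ≤ t0 := Real.sqrt_nonneg _
  have hμ0 : ∀ i, 0 ≤ μhat i := fun i => by
    rw [hμhat i]
    exact div_nonneg (hterm i).le (le_of_lt hS)
  -- the two good events
  set A : Set Ω := {ω | ∀ ε ∈ E, sSup ((fun Δ => ∑ i, Δ i * η ω i) '' C ε) ≤ G ε} with hA
  set B : Set Ω := {ω | ∑ i, μhat i * η ω i ≤ t0} with hB
  -- tail bound for the weighted Gaussian sum
  have hvpos : ∀ i, (0 : ℝ) < ((Real.toNNReal ((σ i) ^ 2 / (N i : ℝ))) : ℝ) := by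
    intro i
    rw [Real.coe_toNNReal _ (le_of_lt (div_pos (pow_pos (hσ i) 2) (hNpos i)))]
    exact div_pos (pow_pos (hσ i) 2) (hNpos i)
  have hBc : P Bᶜ ≤ ENNReal.ofReal δ := by
    have hsub : Bᶜ ⊆ {ω | t0 ≤ ∑ i, μhat i * η ω i} := by
      intro ω hω
      simp only [hB, Set.mem_compl_iff, Set.mem_setOf_eq] at hω
      exact le_of_lt (lt_of_not_ge hω)
    have htail := gauss_weighted_sum_tail P d μhat
      (fun i => Real.toNNReal ((σ i) ^ 2 / (N i : ℝ))) hvpos η hηmeas hηind hηlaw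
      t0 (t0 * S) (mul_nonneg ht0 hS.le)
    have hexp : -(t0 * S) * t0
        + ∑ i, ((Real.toNNReal ((σ i) ^ 2 / (N i : ℝ))) : ℝ) * ((t0 * S) * μhat i) ^ 2 / 2
        = Real.log δ := by
      have hsum : ∑ i, ((Real.toNNReal ((σ i) ^ 2 / (N i : ℝ))) : ℝ)
          * ((t0 * S) * μhat i) ^ 2 / 2 = t0 ^ 2 * S / 2 := by
        have hterm' : ∀ i, ((Real.toNNReal ((σ i) ^ 2 / (N i : ℝ))) : ℝ)
            * ((t0 * S) * μhat i) ^ 2 / 2 = (t0 ^ 2 / 2) * ((N i : ℝ) / (σ i) ^ 2) := by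
          intro i
          rw [Real.coe_toNNReal _ (le_of_lt (div_pos (pow_pos (hσ i) 2) (hNpos i))), hμhat i]
          have h1 : (σ i) ^ 2 ≠ 0 := ne_of_gt (pow_pos (hσ i) 2)
          have h2 : (N i : ℝ) ≠ 0 := ne_of_gt (hNpos i)
          have h3 : S ≠ 0 := ne_of_gt hS
          field_simp
        rw [Finset.sum_congr rfl fun i _ => hterm' i, ← Finset.mul_sum, ← hSdef]
        ring
      have ht0sq : t0 ^ 2 = 2 * Real.log (1 / δ) / S := by
        rw [ht0def, Real.sq_sqrt (div_nonneg (by linarith) hS.le)]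
      have hgoal : -(t0 * S) * t0 + t0 ^ 2 * S / 2 = -(t0 ^ 2 * S) / 2 := by ring
      rw [hsum, hgoal, ht0sq]
      have h3 : S ≠ 0 := ne_of_gt hS
      rw [Real.log_div one_ne_zero (ne_of_gt hδ), Real.log_one]
      field_simp
      ring
    rw [hexp, Real.exp_log hδ] at htail
    refine le_trans (measure_mono hsub) ?_
    rw [ENNReal.le_ofReal_iff_toReal_le (measure_ne_top P _) hδ.le]
    exact htail
  -- the pointwise inclusion
  have hsub : A ∩ B ⊆ {ω | ∑ i, (μhat i + Δhat ω (εhat ω) i) * (r i + η ω i)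
          - G (ceil (εhat ω))
          - Real.sqrt (2 * Real.log (1 / δ) / (∑ j, (N j : ℝ) / (σ j) ^ 2))
        ≤ ∑ i, (μhat i + Δhat ω (εhat ω) i) * r i} := by
    rintro ω ⟨hωA, hωB⟩
    obtain ⟨hεE, -⟩ := hεhat ω
    obtain ⟨hεpos, hεle⟩ := hE _ hεE
    obtain ⟨hcE, hlece, hmin⟩ := hceil _ hεpos hεle
    have hceq : ceil (εhat ω) = εhat ω := le_antisymm (hmin _ hεE le_rfl) hlece
    obtain ⟨hΔmem, -⟩ := hΔhat ω _ hεE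
    -- bound on the simplex coordinates gives BddAbove
    have hbdd : BddAbove ((fun Δ => ∑ i, Δ i * η ω i) '' C (εhat ω)) := by
      refine ⟨∑ i, (μhat i + 1) * |η ω i|, ?_⟩
      rintro y ⟨Δ', hΔ', rfl⟩
      rw [hC] at hΔ'
      obtain ⟨h1', h2', -⟩ := hΔ'
      refine Finset.sum_le_sum fun i _ => ?_
      have hub : Δ' i + μhat i ≤ 1 := by
        rw [← h2']
        exact Finset.single_le_sum (f := fun j => Δ' j + μhat j) (fun j _ => h1' j)
          (Finset.mem_univ i)
      have habs : |Δ' i| ≤ μhat i + 1 := by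
        rw [abs_le]
        constructor
        · linarith [h1' i]
        · linarith [hμ0 i]
      calc Δ' i * η ω i ≤ |Δ' i * η ω i| := le_abs_self _
        _ = |Δ' i| * |η ω i| := abs_mul _ _
        _ ≤ (μhat i + 1) * |η ω i| := mul_le_mul_of_nonneg_right habs (abs_nonneg _)
    have hΔη : ∑ i, Δhat ω (εhat ω) i * η ω i ≤ G (εhat ω) :=
      le_trans (le_csSup hbdd ⟨Δhat ω (εhat ω), hΔmem, rfl⟩) (hωA _ hεE)
    have hμη : ∑ i, μhat i * η ω i ≤ t0 := hωB
    have hsplit : ∑ i, (μhat i + Δhat ω (εhat ω) i) * (r i + η ω i)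
        = (∑ i, (μhat i + Δhat ω (εhat ω) i) * r i)
          + (∑ i, μhat i * η ω i) + (∑ i, Δhat ω (εhat ω) i * η ω i) := by
      rw [← Finset.sum_add_distrib, ← Finset.sum_add_distrib]
      exact Finset.sum_congr rfl fun i _ => by ring
    show ∑ i, (μhat i + Δhat ω (εhat ω) i) * (r i + η ω i)
          - G (ceil (εhat ω))
          - Real.sqrt (2 * Real.log (1 / δ) / (∑ j, (N j : ℝ) / (σ j) ^ 2))
        ≤ ∑ i, (μhat i + Δhat ω (εhat ω) i) * r i
    rw [hceq, ← hSdef, ← ht0def]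
    linarith
  -- put everything together
  calc ENNReal.ofReal (1 - 2 * δ) = ENNReal.ofReal ((1 - δ) - δ) := by ring_nf
    _ = ENNReal.ofReal (1 - δ) - ENNReal.ofReal δ := ENNReal.ofReal_sub _ hδ.le
    _ ≤ P A - P Bᶜ := tsub_le_tsub hG hBc
    _ ≤ P (A \ Bᶜ) := le_measure_diff
    _ = P (A ∩ B) := by rw [Set.diff_compl]
    _ ≤ _ := measure_mono hsub
end

section
/- In the strong-signal one-sample-per-arm instance, for every 0 ≤ ε ≤ 1/√n, with probability at least 1−δ the empirically optimal improvement vector Δ̂_ε in the trust region C(ε) satisfies Δ̂_εᵀ r ≥ ε√n · [1/2 − σ(1 + sqrt(8 log(2/δ)/n))]. -/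
open MeasureTheory ProbabilityTheory Real Finset

open scoped NNReal ENNReal

lemma my_integral_exp_quad {b : ℝ} (c : ℝ) (hb : b < 0) :
    ∫ x : ℝ, rexp (b * x ^ 2 + c * x) = Real.sqrt (π / (-b)) * rexp (-c ^ 2 / (4 * b)) := by
  have hb' : b ≠ 0 := hb.ne
  have key : ∀ x : ℝ, b * x ^ 2 + c * x = -(-b) * (x + c / (2 * b)) ^ 2 + -c ^ 2 / (4 * b) := by
    intro x; rw [neg_neg]; field_simp; ring
  simp_rw [key, Real.exp_add, integral_mul_const]
  rw [integral_add_right_eq_self (fun x => rexp (-(-b) * x ^ 2)) (c / (2 * b)),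
    integral_gaussian]

lemma my_integrable_exp_quad {b : ℝ} (c : ℝ) (hb : b < 0) :
    Integrable (fun x : ℝ => rexp (b * x ^ 2 + c * x)) := by
  have hb' : b ≠ 0 := hb.ne
  have key : ∀ x : ℝ, b * x ^ 2 + c * x = -(-b) * (x + c / (2 * b)) ^ 2 + -c ^ 2 / (4 * b) := by
    intro x; rw [neg_neg]; field_simp; ring
  simp_rw [key, Real.exp_add]
  exact (Integrable.comp_add_right (integrable_exp_neg_mul_sq (neg_pos.2 hb)) _).mul_const _


lemma my_integral_gaussianReal {v : ℝ≥0} (hv : v ≠ 0) (g : ℝ → ℝ) :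
    ∫ x, g x ∂(gaussianReal 0 v) = ∫ x, gaussianPDFReal 0 v x * g x := by
  rw [gaussianReal_of_var_ne_zero _ hv]
  have h1 : gaussianPDF 0 v = fun x => ((Real.toNNReal (gaussianPDFReal 0 v x) : ℝ≥0) : ℝ≥0∞) := by
    rfl
  rw [h1, integral_withDensity_eq_integral_smul
    ((measurable_gaussianPDFReal 0 v).real_toNNReal) g]
  congr 1 with x
  rw [NNReal.smul_def, Real.coe_toNNReal _ (gaussianPDFReal_nonneg 0 v x), smul_eq_mul]

lemma my_integrable_gaussianReal {v : ℝ≥0} (hv : v ≠ 0) (g : ℝ → ℝ)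
    (h : Integrable (fun x => gaussianPDFReal 0 v x * g x)) :
    Integrable g (gaussianReal 0 v) := by
  rw [gaussianReal_of_var_ne_zero _ hv]
  have h1 : gaussianPDF 0 v = fun x => ((Real.toNNReal (gaussianPDFReal 0 v x) : ℝ≥0) : ℝ≥0∞) := by
    rfl
  rw [h1, integrable_withDensity_iff_integrable_smul
    ((measurable_gaussianPDFReal 0 v).real_toNNReal)]
  refine h.congr (ae_of_all _ fun x => ?_)
  simp only [NNReal.smul_def, Real.coe_toNNReal _ (gaussianPDFReal_nonneg 0 v x), smul_eq_mul]

lemma my_gaussian_exp_quad {v : ℝ≥0} (hv : v ≠ 0) {a : ℝ} (b : ℝ)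
    (ha : 0 < 1 - 2 * a * (v : ℝ)) :
    Integrable (fun x : ℝ => rexp (a * x ^ 2 + b * x)) (gaussianReal 0 v) ∧
    ∫ x, rexp (a * x ^ 2 + b * x) ∂(gaussianReal 0 v)
      = (Real.sqrt (1 - 2 * a * (v : ℝ)))⁻¹
        * rexp ((v : ℝ) * b ^ 2 / (2 * (1 - 2 * a * (v : ℝ)))) := by
  have hv0 : (0 : ℝ) < v := NNReal.coe_pos.mpr (pos_iff_ne_zero.mpr hv)
  have hv0' : (v : ℝ) ≠ 0 := hv0.ne'
  have hB : a - (2 * (v : ℝ))⁻¹ < 0 := by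
    have h2v : (0 : ℝ) < 2 * v := by positivity
    have := mul_inv_cancel₀ h2v.ne'
    nlinarith [mul_pos h2v (inv_pos.mpr h2v)]
  have hw0 : (1 - 2 * a * (v : ℝ)) ≠ 0 := ha.ne'
  have hpdf : ∀ x : ℝ, gaussianPDFReal 0 v x * rexp (a * x ^ 2 + b * x)
      = (Real.sqrt (2 * π * v))⁻¹ * rexp ((a - (2 * (v : ℝ))⁻¹) * x ^ 2 + b * x) := by
    intro x
    rw [gaussianPDFReal, mul_assoc, ← Real.exp_add]
    congr 1
    field_simp
    ring
  constructor
  · refine my_integrable_gaussianReal hv _ ?_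
    simp_rw [hpdf]
    exact (my_integrable_exp_quad b hB).const_mul _
  · rw [my_integral_gaussianReal hv]
    simp_rw [hpdf]
    rw [integral_const_mul, my_integral_exp_quad b hB]
    have h1 : π / (-(a - (2 * (v : ℝ))⁻¹)) = (2 * π * v) / (1 - 2 * a * (v : ℝ)) := by
      rw [div_eq_div_iff (by linarith : -(a - (2 * (v : ℝ))⁻¹) ≠ 0) ha.ne']
      field_simp
      ring
    have h2 : -b ^ 2 / (4 * (a - (2 * (v : ℝ))⁻¹))
        = (v : ℝ) * b ^ 2 / (2 * (1 - 2 * a * (v : ℝ))) := by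
      rw [div_eq_div_iff (by nlinarith : (4 * (a - (2 * (v : ℝ))⁻¹)) ≠ 0)
        (by positivity : (2 * (1 - 2 * a * (v : ℝ))) ≠ 0)]
      field_simp
      ring
    rw [h1, h2, Real.sqrt_div (by positivity) _, ← mul_assoc, div_eq_mul_inv, ← mul_assoc,
      inv_mul_cancel₀ (by positivity : Real.sqrt (2 * π * (v : ℝ)) ≠ 0), one_mul]

lemma my_mgf_transfer {Ω : Type*} [MeasurableSpace Ω] (P : Measure Ω) {X : Ω → ℝ}
    (hX : Measurable X) {v : ℝ≥0} (hv : v ≠ 0)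
    (hlaw : Measure.map X P = gaussianReal 0 v) {a : ℝ} (b : ℝ)
    (ha : 0 < 1 - 2 * a * (v : ℝ)) :
    Integrable (fun ω => rexp (a * X ω ^ 2 + b * X ω)) P ∧
    ∫ ω, rexp (a * X ω ^ 2 + b * X ω) ∂P
      = (Real.sqrt (1 - 2 * a * (v : ℝ)))⁻¹
        * rexp ((v : ℝ) * b ^ 2 / (2 * (1 - 2 * a * (v : ℝ)))) := by
  have hg : AEStronglyMeasurable (fun x : ℝ => rexp (a * x ^ 2 + b * x)) (Measure.map X P) := by
    exact (Real.continuous_exp.comp (by continuity)).aestronglyMeasurable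
  constructor
  · have h1 : Integrable (fun x : ℝ => rexp (a * x ^ 2 + b * x)) (Measure.map X P) := by
      rw [hlaw]; exact (my_gaussian_exp_quad hv b ha).1
    exact (integrable_map_measure hg hX.aemeasurable).mp h1
  · have h2 : ∫ x, rexp (a * x ^ 2 + b * x) ∂(Measure.map X P)
        = ∫ ω, rexp (a * X ω ^ 2 + b * X ω) ∂P := integral_map hX.aemeasurable hg
    rw [hlaw] at h2
    rw [← h2, (my_gaussian_exp_quad hv b ha).2]

lemma my_chiSq_tail {Ω : Type*} [MeasurableSpace Ω] (P : Measure Ω) [IsProbabilityMeasure P]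
    (n : ℕ) (hn : 0 < n) (σ : ℝ) (hσ : 0 < σ)
    (η : Ω → Fin n → ℝ)
    (hηmeas : ∀ i, Measurable fun ω => η ω i)
    (hηind : iIndepFun (fun i ω => η ω i) P)
    (hηlaw : ∀ i, Measure.map (fun ω => η ω i) P = gaussianReal 0 (Real.toNNReal (σ ^ 2)))
    (L : ℝ) (hL : 0 < L) :
    (P {ω | σ ^ 2 * (Real.sqrt n + Real.sqrt (2 * L)) ^ 2 ≤ ∑ i, (η ω i) ^ 2}).toReal
      ≤ rexp (-L) := by
  have hn' : (0 : ℝ) < n := by exact_mod_cast hn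
  have hσ0 : σ ≠ 0 := hσ.ne'
  set v : ℝ≥0 := Real.toNNReal (σ ^ 2) with hvdef
  have hvc : (v : ℝ) = σ ^ 2 := Real.coe_toNNReal _ (sq_nonneg σ)
  have hvne : v ≠ 0 := by
    rw [hvdef, Ne, Real.toNNReal_eq_zero, not_le]; positivity
  set q := Real.sqrt (2 * L / n) with hqdef
  have hq : 0 < q := Real.sqrt_pos.mpr (by positivity)
  have hq2 : q ^ 2 = 2 * L / n := Real.sq_sqrt (by positivity)
  set lam := (1 - ((1 + q) ^ 2)⁻¹) / (2 * σ ^ 2) with hlamdef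
  have h1q : (1 : ℝ) < (1 + q) ^ 2 := by nlinarith
  have hinv1 : ((1 + q) ^ 2)⁻¹ ≤ 1 := inv_le_one_of_one_le₀ h1q.le
  have hlamnn : 0 ≤ lam := div_nonneg (by linarith) (by positivity)
  have hkey : 1 - 2 * lam * (v : ℝ) = ((1 + q) ^ 2)⁻¹ := by
    rw [hvc, hlamdef]; field_simp; ring
  have hkeypos : 0 < 1 - 2 * lam * (v : ℝ) := by rw [hkey]; positivity
  have hint : ∀ i : Fin n, Integrable (fun ω => rexp (lam * (η ω i) ^ 2)) P := by
    intro i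
    have h1 := (my_mgf_transfer P (hηmeas i) hvne (hηlaw i) 0 hkeypos).1
    simpa using h1
  have hmgf : ∀ i : Fin n, mgf (fun ω => (η ω i) ^ 2) P lam = 1 + q := by
    intro i
    have h2 := (my_mgf_transfer P (hηmeas i) hvne (hηlaw i) 0 hkeypos).2
    simp only [zero_mul, add_zero, mul_zero, ne_eq, OfNat.ofNat_ne_zero,
      not_false_eq_true, zero_pow, zero_div, Real.exp_zero, mul_one] at h2
    have h3 : mgf (fun ω => (η ω i) ^ 2) P lam = ∫ ω, rexp (lam * (η ω i) ^ 2) ∂P := rfl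
    rw [h3, h2, hkey, Real.sqrt_inv, Real.sqrt_sq (by positivity), inv_inv]
  have hindsq : iIndepFun (fun i ω => (η ω i) ^ 2) P :=
    hηind.comp (fun _ (x : ℝ) => x ^ 2) (fun _ => measurable_id.pow_const 2)
  have hmeassq : ∀ i : Fin n, Measurable ((fun i ω => (η ω i) ^ 2) i) :=
    fun i => (hηmeas i).pow_const 2
  have hintsum : Integrable
      (fun ω => rexp (lam * (∑ i : Fin n, fun ω' => (η ω' i) ^ 2) ω)) P :=
    hindsq.integrable_exp_mul_sum hmeassq (fun i _ => hint i)
  have hcher := measure_ge_le_exp_mul_mgf (μ := P)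
    (X := ∑ i : Fin n, fun ω => (η ω i) ^ 2)
    (σ ^ 2 * (Real.sqrt n + Real.sqrt (2 * L)) ^ 2) hlamnn hintsum
  have hmgfsum : mgf (∑ i : Fin n, fun ω => (η ω i) ^ 2) P lam = (1 + q) ^ n := by
    rw [hindsq.mgf_sum hmeassq]
    simp [hmgf]
  have hset : {ω | σ ^ 2 * (Real.sqrt n + Real.sqrt (2 * L)) ^ 2
      ≤ (∑ i : Fin n, fun ω' => (η ω' i) ^ 2) ω}
      = {ω | σ ^ 2 * (Real.sqrt n + Real.sqrt (2 * L)) ^ 2 ≤ ∑ i, (η ω i) ^ 2} := by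
    ext ω; simp [Finset.sum_apply]
  rw [hset, hmgfsum] at hcher
  refine hcher.trans ?_
  -- numeric bound
  have hsqrt2L : Real.sqrt (2 * L) = Real.sqrt n * q := by
    rw [hqdef, Real.sqrt_div (by positivity) _]
    field_simp
  have hlamu : lam * (σ ^ 2 * (Real.sqrt n + Real.sqrt (2 * L)) ^ 2) = n * q + L := by
    have hu : σ ^ 2 * (Real.sqrt n + Real.sqrt (2 * L)) ^ 2
        = σ ^ 2 * ((n : ℝ) * (1 + q) ^ 2) := by
      rw [hsqrt2L]
      rw [show (Real.sqrt n + Real.sqrt n * q) ^ 2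
        = (Real.sqrt n * Real.sqrt n) * (1 + q) ^ 2 by ring, Real.mul_self_sqrt hn'.le]
    have hLq : L = (n : ℝ) * q ^ 2 / 2 := by rw [hq2]; field_simp
    rw [hu, hlamdef, hLq]
    field_simp
    ring
  rw [neg_mul, hlamu]
  have hexpq : (1 + q) ^ n ≤ rexp q ^ n :=
    pow_le_pow_left₀ (by positivity) (by linarith [Real.add_one_le_exp q]) n
  calc rexp (-((n : ℝ) * q + L)) * (1 + q) ^ n
      ≤ rexp (-((n : ℝ) * q + L)) * rexp q ^ n := by
        exact mul_le_mul_of_nonneg_left hexpq (Real.exp_nonneg _)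
    _ = rexp (-L) := by
        rw [← Real.exp_nat_mul, ← Real.exp_add]
        congr 1
        ring

lemma my_lin_tail {Ω : Type*} [MeasurableSpace Ω] (P : Measure Ω) [IsProbabilityMeasure P]
    (n : ℕ) (hn : 0 < n) (σ : ℝ) (hσ : 0 < σ)
    (η : Ω → Fin n → ℝ)
    (hηmeas : ∀ i, Measurable fun ω => η ω i)
    (hηind : iIndepFun (fun i ω => η ω i) P)
    (hηlaw : ∀ i, Measure.map (fun ω => η ω i) P = gaussianReal 0 (Real.toNNReal (σ ^ 2)))
    (L : ℝ) (hL : 0 < L) (ε : ℝ) (hε : 0 < ε) (c : Fin n → ℝ)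
    (hcsq : ∀ i, (c i) ^ 2 = ε ^ 2 / n) :
    (P {ω | ε * σ * Real.sqrt (2 * L) ≤ ∑ i, -(c i) * η ω i}).toReal ≤ rexp (-L) := by
  have hn' : (0 : ℝ) < n := by exact_mod_cast hn
  have hσ0 : σ ≠ 0 := hσ.ne'
  set v : ℝ≥0 := Real.toNNReal (σ ^ 2) with hvdef
  have hvc : (v : ℝ) = σ ^ 2 := Real.coe_toNNReal _ (sq_nonneg σ)
  have hvne : v ≠ 0 := by
    rw [hvdef, Ne, Real.toNNReal_eq_zero, not_le]; positivity
  have h2L : Real.sqrt (2 * L) ^ 2 = 2 * L := Real.sq_sqrt (by positivity)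
  set s := Real.sqrt (2 * L) / (ε * σ) with hsdef
  have hsnn : 0 ≤ s := by positivity
  have hone : 0 < 1 - 2 * 0 * (v : ℝ) := by norm_num
  have hint : ∀ i : Fin n, Integrable (fun ω => rexp (s * (-(c i) * η ω i))) P := by
    intro i
    have h1 := (my_mgf_transfer P (hηmeas i) hvne (hηlaw i) (s * -(c i)) hone).1
    refine h1.congr (ae_of_all _ fun ω => ?_)
    exact congrArg rexp (by ring)
  have hmgf : ∀ i : Fin n, mgf (fun ω => -(c i) * η ω i) P s = rexp (L / n) := by
    intro i
    have h2 := (my_mgf_transfer P (hηmeas i) hvne (hηlaw i) (s * -(c i)) hone).2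
    have h3 : mgf (fun ω => -(c i) * η ω i) P s
        = ∫ ω, rexp (0 * (η ω i) ^ 2 + (s * -(c i)) * η ω i) ∂P := by
      refine integral_congr_ae (ae_of_all _ fun ω => ?_)
      exact congrArg rexp (by ring)
    rw [h3, h2]
    have e1 : (1 : ℝ) - 2 * 0 * (v : ℝ) = 1 := by norm_num
    rw [e1]
    have e2 : (v : ℝ) * (s * -(c i)) ^ 2 / (2 * 1) = L / n := by
      have e3 : (s * -(c i)) ^ 2 = (2 * L) / (ε ^ 2 * σ ^ 2) * (c i) ^ 2 := by
        rw [mul_pow, div_pow, h2L, neg_sq, mul_pow]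
      rw [hvc, e3, hcsq i]
      field_simp
    rw [e2]
    simp
  have hindY : iIndepFun (fun i ω => -(c i) * η ω i) P :=
    hηind.comp (fun i (x : ℝ) => -(c i) * x) (fun i => measurable_id.const_mul _)
  have hmeasY : ∀ i : Fin n, Measurable ((fun i ω => -(c i) * η ω i) i) :=
    fun i => (hηmeas i).const_mul _
  have hintsum : Integrable
      (fun ω => rexp (s * (∑ i : Fin n, fun ω' => -(c i) * η ω' i) ω)) P :=
    hindY.integrable_exp_mul_sum hmeasY (fun i _ => hint i)
  have hcher := measure_ge_le_exp_mul_mgf (μ := P)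
    (X := ∑ i : Fin n, fun ω => -(c i) * η ω i)
    (ε * σ * Real.sqrt (2 * L)) hsnn hintsum
  have hmgfsum : mgf (∑ i : Fin n, fun ω => -(c i) * η ω i) P s = rexp L := by
    rw [hindY.mgf_sum hmeasY]
    simp only [hmgf, Finset.prod_const, card_univ, Fintype.card_fin]
    rw [← Real.exp_nat_mul, mul_div_cancel₀ _ hn'.ne']
  have hset : {ω | ε * σ * Real.sqrt (2 * L) ≤ (∑ i : Fin n, fun ω' => -(c i) * η ω' i) ω}
      = {ω | ε * σ * Real.sqrt (2 * L) ≤ ∑ i, -(c i) * η ω i} := by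
    ext ω; simp [Finset.sum_apply]
  rw [hset, hmgfsum] at hcher
  refine hcher.trans ?_
  rw [← Real.exp_add]
  have hprod : s * (ε * σ * Real.sqrt (2 * L)) = 2 * L := by
    rw [hsdef, show Real.sqrt (2 * L) / (ε * σ) * (ε * σ * Real.sqrt (2 * L))
      = (Real.sqrt (2 * L) * Real.sqrt (2 * L)) * ((ε * σ) / (ε * σ)) by ring,
      div_self (by positivity : ε * σ ≠ 0), mul_one,
      Real.mul_self_sqrt (by positivity : (0:ℝ) ≤ 2 * L)]
  have hsθ : -s * (ε * σ * Real.sqrt (2 * L)) + L = -L := by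
    rw [neg_mul, hprod]; ring
  rw [hsθ]

lemma my_half_sum {n : ℕ} (hn2 : n / 2 ≤ n) (A B : ℝ) :
    ∑ i : Fin n, (if (i : ℕ) < n / 2 then A else B)
      = ((n / 2 : ℕ) : ℝ) * A + (((n - n / 2 : ℕ)) : ℝ) * B := by
  rw [Fin.sum_univ_eq_sum_range (fun j => if j < n / 2 then A else B) n]
  rw [Finset.range_eq_Ico, ← Finset.sum_Ico_consecutive _ (Nat.zero_le _) hn2]
  have e1 : ∑ j ∈ Finset.Ico 0 (n / 2), (if j < n / 2 then A else B)
      = ((n / 2 : ℕ) : ℝ) * A := by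
    rw [Finset.sum_congr rfl fun j hj => if_pos (Finset.mem_Ico.mp hj).2, Finset.sum_const,
      Nat.card_Ico, Nat.sub_zero, nsmul_eq_mul]
  have e2 : ∑ j ∈ Finset.Ico (n / 2) n, (if j < n / 2 then A else B)
      = ((n - n / 2 : ℕ) : ℝ) * B := by
    rw [Finset.sum_congr rfl fun j hj => if_neg (not_lt.mpr (Finset.mem_Ico.mp hj).1),
      Finset.sum_const, Nat.card_Ico, nsmul_eq_mul]
  rw [e1, e2]


set_option maxHeartbeats 2000000 in
/-- **Strong-signal one-sample-per-arm instance: value of the empirically optimal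
improvement.** For every 0 ≤ ε ≤ 1/√n, with probability at least 1−δ the empirically
optimal improvement vector Δ̂_ε in the trust region C(ε) satisfies
Δ̂_εᵀ r ≥ ε√n · [1/2 − σ(1 + sqrt(8 log(2/δ)/n))]. -/
theorem strong_signal_improvement
    {Ω : Type*} [MeasurableSpace Ω] (P : Measure Ω) [IsProbabilityMeasure P]
    (n : ℕ) (hn : 0 < n) (hneven : Even n)
    (σ : ℝ) (hσ : 0 ≤ σ)
    -- the true mean reward vector: 1 on the first half of the arms, 0 on the rest
    (r : Fin n → ℝ) (hr : ∀ i : Fin n, r i = if (i : ℕ) < n / 2 then 1 else 0)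
    -- the noise vector η ~ N(0, σ² I_n)
    (η : Ω → Fin n → ℝ)
    (hηmeas : ∀ i, Measurable fun ω => η ω i)
    (hηind : iIndepFun (fun i ω => η ω i) P)
    (hηlaw : ∀ i, Measure.map (fun ω => η ω i) P
      = gaussianReal 0 (Real.toNNReal (σ ^ 2)))
    -- the trust region around the uniform reference policy
    (C : ℝ → Set (Fin n → ℝ))
    (hC : ∀ ε, C ε = {Δ | (∀ i, 0 ≤ Δ i + 1 / (n : ℝ)) ∧ (∑ i, Δ i) = 0
      ∧ Real.sqrt (∑ i, (Δ i) ^ 2) ≤ ε})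
    -- Δ̂_ε maximizes the empirical return Δᵀr̂ over C(ε), where r̂ = r + η
    (Δhat : Ω → ℝ → Fin n → ℝ)
    (hΔhat : ∀ ω, ∀ ε, 0 ≤ ε → Δhat ω ε ∈ C ε ∧
      ∀ Δ ∈ C ε, ∑ i, Δ i * (r i + η ω i) ≤ ∑ i, Δhat ω ε i * (r i + η ω i))
    (δ : ℝ) (hδ : 0 < δ) (hδ1 : δ < 1) :
    ∀ ε, 0 ≤ ε → ε ≤ 1 / Real.sqrt n →
      ENNReal.ofReal (1 - δ) ≤
        P {ω | ε * Real.sqrt n *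
            (1 / 2 - σ * (1 + Real.sqrt (8 * Real.log (2 / δ) / n)))
          ≤ ∑ i, Δhat ω ε i * r i} := by
  intro ε hε0 hεub
  have hn' : (0 : ℝ) < n := by exact_mod_cast hn
  have hsn : 0 < Real.sqrt n := Real.sqrt_pos.mpr hn'
  have hnn : Real.sqrt n * Real.sqrt n = (n : ℝ) := Real.mul_self_sqrt hn'.le
  have hhalf : n / 2 + n / 2 = n := by obtain ⟨k, hk⟩ := hneven; omega
  have hcast : ((n / 2 : ℕ) : ℝ) = (n : ℝ) / 2 := by
    have h1 : (2 : ℝ) * ((n / 2 : ℕ) : ℝ) = (n : ℝ) := by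
      exact_mod_cast (by omega : 2 * (n / 2) = n)
    linarith
  set L := Real.log (2 / δ) with hLdef
  have hL : 0 < L := Real.log_pos (by rw [lt_div_iff₀ hδ]; linarith)
  set c : Fin n → ℝ :=
    fun i => if (i : ℕ) < n / 2 then ε / Real.sqrt n else -(ε / Real.sqrt n) with hcdef
  have hci : ∀ i : Fin n, c i
      = if (i : ℕ) < n / 2 then ε / Real.sqrt n else -(ε / Real.sqrt n) :=
    fun i => by simp only [hcdef]
  have hcsq : ∀ i, (c i) ^ 2 = ε ^ 2 / n := by
    intro i
    rw [hci i]
    by_cases h : (i : ℕ) < n / 2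
    · rw [if_pos h, div_pow, Real.sq_sqrt hn'.le]
    · rw [if_neg h, neg_sq, div_pow, Real.sq_sqrt hn'.le]
  have hcC : c ∈ C ε := by
    rw [hC ε]
    refine ⟨fun i => ?_, ?_, ?_⟩
    · rw [hci i]
      by_cases h : (i : ℕ) < n / 2
      · rw [if_pos h]; positivity
      · rw [if_neg h]
        have h1 : ε / Real.sqrt n ≤ (1 / Real.sqrt n) / Real.sqrt n :=
          (div_le_div_iff_of_pos_right hsn).mpr hεub
        rw [div_div, hnn] at h1
        linarith
    · rw [show (∑ i, c i) = ∑ i : Fin n,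
          (if (i : ℕ) < n / 2 then ε / Real.sqrt n else -(ε / Real.sqrt n)) from
          Finset.sum_congr rfl fun i _ => hci i,
        my_half_sum (by omega), show n - n / 2 = n / 2 from by omega]
      ring
    · have hsum : ∑ i, (c i) ^ 2 = ε ^ 2 := by
        rw [Finset.sum_congr rfl fun i _ => hcsq i, Finset.sum_const, card_univ,
          Fintype.card_fin, nsmul_eq_mul]
        field_simp
      rw [hsum, Real.sqrt_sq hε0]
  have hcr : ∑ i, c i * r i = ε * Real.sqrt n / 2 := by
    have h1 : ∀ i : Fin n, c i * r i = if (i : ℕ) < n / 2 then ε / Real.sqrt n else 0 := by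
      intro i
      rw [hr i, hci i]
      by_cases h : (i : ℕ) < n / 2
      · rw [if_pos h, if_pos h, if_pos h, mul_one]
      · rw [if_neg h, if_neg h, if_neg h, mul_zero]
    rw [Finset.sum_congr rfl fun i _ => h1 i, my_half_sum (by omega), hcast, mul_zero,
      add_zero]
    field_simp
    linear_combination (-ε) * hnn
  -- deterministic step
  have hdet : ∀ ω, (∑ i, (η ω i) ^ 2 ≤ σ ^ 2 * (Real.sqrt n + Real.sqrt (2 * L)) ^ 2) →
      (-(ε * σ * Real.sqrt (2 * L)) ≤ ∑ i, c i * η ω i) →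
      ε * Real.sqrt n * (1 / 2 - σ * (1 + Real.sqrt (8 * L / n)))
        ≤ ∑ i, Δhat ω ε i * r i := by
    intro ω hA hB
    obtain ⟨hmem, hopt⟩ := hΔhat ω ε hε0
    have h1 := hopt c hcC
    simp_rw [mul_add] at h1
    rw [Finset.sum_add_distrib, Finset.sum_add_distrib] at h1
    rw [hC ε] at hmem
    obtain ⟨-, -, hnorm⟩ := hmem
    have hΔnn : 0 ≤ ∑ i, (Δhat ω ε i) ^ 2 := by positivity
    have hΔsq : ∑ i, (Δhat ω ε i) ^ 2 ≤ ε ^ 2 := by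
      nlinarith [Real.sq_sqrt hΔnn, Real.sqrt_nonneg (∑ i, (Δhat ω ε i) ^ 2)]
    have hηnn : 0 ≤ ∑ i, (η ω i) ^ 2 := by positivity
    have hynn : 0 ≤ ε * (σ * (Real.sqrt n + Real.sqrt (2 * L))) := by positivity
    have hCS : ∑ i, Δhat ω ε i * η ω i ≤ ε * (σ * (Real.sqrt n + Real.sqrt (2 * L))) := by
      have h2 := Finset.sum_mul_sq_le_sq_mul_sq univ (fun i => Δhat ω ε i) (fun i => η ω i)
      have hx2 : (∑ i, Δhat ω ε i * η ω i) ^ 2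
          ≤ (ε * (σ * (Real.sqrt n + Real.sqrt (2 * L)))) ^ 2 := by
        calc (∑ i, Δhat ω ε i * η ω i) ^ 2
            ≤ (∑ i, (Δhat ω ε i) ^ 2) * ∑ i, (η ω i) ^ 2 := h2
          _ ≤ ε ^ 2 * (σ ^ 2 * (Real.sqrt n + Real.sqrt (2 * L)) ^ 2) :=
              mul_le_mul hΔsq hA hηnn (sq_nonneg ε)
          _ = (ε * (σ * (Real.sqrt n + Real.sqrt (2 * L)))) ^ 2 := by ring
      nlinarith [hx2, hynn]
    have h8 : Real.sqrt (8 * L / n) = 2 * Real.sqrt (2 * L) / Real.sqrt n := by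
      rw [Real.sqrt_div (by positivity) _, show (8 : ℝ) * L = 4 * (2 * L) by ring,
        Real.sqrt_mul (by norm_num) _,
        show Real.sqrt 4 = 2 by
          rw [show (4 : ℝ) = 2 ^ 2 by norm_num, Real.sqrt_sq (by norm_num)]]
    have hkey : ε * Real.sqrt n * (1 / 2 - σ * (1 + Real.sqrt (8 * L / n)))
        = ε * Real.sqrt n / 2 - ε * σ * Real.sqrt (2 * L)
          - ε * (σ * (Real.sqrt n + Real.sqrt (2 * L))) := by
      rw [h8]
      field_simp
      ring
    rw [hkey]
    linarith [h1, hB, hCS, hcr]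
  rcases hε0.eq_or_lt with hε | hεpos
  · -- ε = 0
    have hset : {ω | ε * Real.sqrt n *
        (1 / 2 - σ * (1 + Real.sqrt (8 * L / n))) ≤ ∑ i, Δhat ω ε i * r i}
        = Set.univ := by
      ext ω
      simp only [Set.mem_setOf_eq, Set.mem_univ, iff_true]
      obtain ⟨hmem, -⟩ := hΔhat ω ε hε0
      rw [hC ε] at hmem
      obtain ⟨-, -, hnorm⟩ := hmem
      have hΔnn : 0 ≤ ∑ i, (Δhat ω ε i) ^ 2 := by positivity
      have hle : ∑ i, (Δhat ω ε i) ^ 2 ≤ 0 := by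
        nlinarith [Real.sq_sqrt hΔnn, Real.sqrt_nonneg (∑ i, (Δhat ω ε i) ^ 2)]
      have hz : ∀ i : Fin n, Δhat ω ε i = 0 := by
        intro i
        have h0 := (Finset.sum_eq_zero_iff_of_nonneg
          (fun i _ => sq_nonneg (Δhat ω ε i))).mp (le_antisymm hle hΔnn) i (Finset.mem_univ i)
        exact pow_eq_zero_iff (two_ne_zero) |>.mp h0
      simp only [hz, zero_mul, Finset.sum_const_zero]
      rw [← hε]
      norm_num
    rw [hset, measure_univ]
    exact ENNReal.ofReal_le_one.mpr (by linarith)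
  rcases hσ.eq_or_lt with hσ0 | hσpos
  · -- σ = 0
    have hSm : MeasurableSet (⋂ i : Fin n, {ω | η ω i = 0}) :=
      MeasurableSet.iInter fun i => (hηmeas i) (measurableSet_singleton 0)
    have hSc : P (⋂ i : Fin n, {ω | η ω i = 0})ᶜ = 0 := by
      rw [Set.compl_iInter]
      refine measure_iUnion_null fun i => ?_
      have hv0 : Real.toNNReal (σ ^ 2) = 0 := by rw [← hσ0]; simp
      have hmap := Measure.map_apply (μ := P) (f := fun ω => η ω i) (hηmeas i)
        (measurableSet_singleton (0 : ℝ)).compl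
      rw [hηlaw i, hv0, gaussianReal_zero_var,
        Measure.dirac_apply' _ (measurableSet_singleton (0 : ℝ)).compl] at hmap
      simp only [Set.indicator_apply, Set.mem_compl_iff, Set.mem_singleton_iff,
        not_true_eq_false, if_false] at hmap
      have hsets : {ω | η ω i = 0}ᶜ = (fun ω => η ω i) ⁻¹' ({0}ᶜ) := by
        ext ω; simp
      rw [hsets, ← hmap]
    have hS1 : P (⋂ i : Fin n, {ω | η ω i = 0}) = 1 := (prob_compl_eq_zero_iff hSm).mp hSc
    have hsub : (⋂ i : Fin n, {ω | η ω i = 0}) ⊆ {ω | ε * Real.sqrt n *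
        (1 / 2 - σ * (1 + Real.sqrt (8 * L / n))) ≤ ∑ i, Δhat ω ε i * r i} := by
      intro ω hω
      simp only [Set.mem_iInter, Set.mem_setOf_eq] at hω
      refine hdet ω ?_ ?_
      · have h1 : ∑ i, (η ω i) ^ 2 = 0 := by simp [hω]
        rw [h1]; positivity
      · have h1 : ∑ i, c i * η ω i = 0 := by simp [hω]
        rw [h1, ← hσ0]
        norm_num
    calc ENNReal.ofReal (1 - δ) ≤ 1 := ENNReal.ofReal_le_one.mpr (by linarith)
      _ = P (⋂ i : Fin n, {ω | η ω i = 0}) := hS1.symm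
      _ ≤ _ := measure_mono hsub
  · -- main case: σ > 0, ε > 0
    have hδ2 : rexp (-L) = δ / 2 := by
      rw [hLdef, Real.exp_neg, Real.exp_log (by positivity), inv_div]
    have hGAm : MeasurableSet {ω | σ ^ 2 * (Real.sqrt n + Real.sqrt (2 * L)) ^ 2
        ≤ ∑ i, (η ω i) ^ 2} :=
      measurableSet_le measurable_const
        (Finset.measurable_sum _ fun i _ => (hηmeas i).pow_const 2)
    have hGBm : MeasurableSet {ω | ε * σ * Real.sqrt (2 * L) ≤ ∑ i, -(c i) * η ω i} :=
      measurableSet_le measurable_const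
        (Finset.measurable_sum _ fun i _ => (hηmeas i).const_mul _)
    have hPA : P {ω | σ ^ 2 * (Real.sqrt n + Real.sqrt (2 * L)) ^ 2 ≤ ∑ i, (η ω i) ^ 2}
        ≤ ENNReal.ofReal (δ / 2) := by
      have h1 := my_chiSq_tail P n hn σ hσpos η hηmeas hηind hηlaw L hL
      calc P _ = ENNReal.ofReal (P _).toReal := (ENNReal.ofReal_toReal (measure_ne_top P _)).symm
        _ ≤ ENNReal.ofReal (δ / 2) := ENNReal.ofReal_le_ofReal (h1.trans_eq hδ2)
    have hPB : P {ω | ε * σ * Real.sqrt (2 * L) ≤ ∑ i, -(c i) * η ω i}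
        ≤ ENNReal.ofReal (δ / 2) := by
      have h1 := my_lin_tail P n hn σ hσpos η hηmeas hηind hηlaw L hL ε hεpos c hcsq
      calc P _ = ENNReal.ofReal (P _).toReal := (ENNReal.ofReal_toReal (measure_ne_top P _)).symm
        _ ≤ ENNReal.ofReal (δ / 2) := ENNReal.ofReal_le_ofReal (h1.trans_eq hδ2)
    have hUnion : P ({ω | σ ^ 2 * (Real.sqrt n + Real.sqrt (2 * L)) ^ 2 ≤ ∑ i, (η ω i) ^ 2}
        ∪ {ω | ε * σ * Real.sqrt (2 * L) ≤ ∑ i, -(c i) * η ω i}) ≤ ENNReal.ofReal δ := by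
      refine (measure_union_le _ _).trans ?_
      refine (add_le_add hPA hPB).trans ?_
      rw [← ENNReal.ofReal_add (by linarith) (by linarith)]
      norm_num
    have hsub : ({ω | σ ^ 2 * (Real.sqrt n + Real.sqrt (2 * L)) ^ 2 ≤ ∑ i, (η ω i) ^ 2}
        ∪ {ω | ε * σ * Real.sqrt (2 * L) ≤ ∑ i, -(c i) * η ω i})ᶜ
        ⊆ {ω | ε * Real.sqrt n *
            (1 / 2 - σ * (1 + Real.sqrt (8 * L / n))) ≤ ∑ i, Δhat ω ε i * r i} := by
      intro ω hω
      rw [Set.mem_compl_iff, Set.mem_union] at hω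
      push_neg at hω
      obtain ⟨hA, hB⟩ := hω
      rw [Set.mem_setOf_eq, not_le] at hA
      rw [Set.mem_setOf_eq, not_le] at hB
      have hswap : ∑ i, -(c i) * η ω i = -∑ i, c i * η ω i := by
        rw [← Finset.sum_neg_distrib]
        exact Finset.sum_congr rfl fun i _ => neg_mul _ _
      rw [hswap] at hB
      exact hdet ω hA.le (by linarith)
    calc ENNReal.ofReal (1 - δ) = 1 - ENNReal.ofReal δ := by
          rw [ENNReal.ofReal_sub 1 hδ.le, ENNReal.ofReal_one]
      _ ≤ 1 - P ({ω | σ ^ 2 * (Real.sqrt n + Real.sqrt (2 * L)) ^ 2 ≤ ∑ i, (η ω i) ^ 2}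
            ∪ {ω | ε * σ * Real.sqrt (2 * L) ≤ ∑ i, -(c i) * η ω i}) :=
          tsub_le_tsub_left hUnion 1
      _ = P (({ω | σ ^ 2 * (Real.sqrt n + Real.sqrt (2 * L)) ^ 2 ≤ ∑ i, (η ω i) ^ 2}
            ∪ {ω | ε * σ * Real.sqrt (2 * L) ≤ ∑ i, -(c i) * η ω i})ᶜ) :=
          (prob_compl_eq_one_sub (hGAm.union hGBm)).symm
      _ ≤ _ := measure_mono hsub
end

section
/- In the strong-signal one-sample-per-arm instance, for ε = 1/√n and n ≥ 8 log(2/δ), with probability at least 1−δ the empirically optimal improvement vector satisfies Δ̂_εᵀ r ≥ 1/2 − 2σ. -/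
open MeasureTheory ProbabilityTheory Real Finset
open scoped NNReal ENNReal




namespace StrongSignalAux

lemma integral_gaussianReal_eq {v : ℝ≥0} (hv : v ≠ 0) (g : ℝ → ℝ) :
    ∫ x, g x ∂(gaussianReal 0 v) = ∫ x, gaussianPDFReal 0 v x * g x := by
  rw [gaussianReal_of_var_ne_zero _ hv, gaussianPDF_def]
  have hmeas : Measurable fun x => (gaussianPDFReal 0 v x).toNNReal :=
    (measurable_gaussianPDFReal 0 v).real_toNNReal
  rw [show (fun x => ENNReal.ofReal (gaussianPDFReal 0 v x))
      = fun x => ((gaussianPDFReal 0 v x).toNNReal : ℝ≥0∞) from rfl,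
    integral_withDensity_eq_integral_smul hmeas g]
  congr 1
  ext x
  rw [NNReal.smul_def, smul_eq_mul, Real.coe_toNNReal _ (gaussianPDFReal_nonneg 0 v x)]

lemma integrable_gaussianReal_iff {v : ℝ≥0} (hv : v ≠ 0) (g : ℝ → ℝ) :
    Integrable g (gaussianReal 0 v)
      ↔ Integrable (fun x => gaussianPDFReal 0 v x * g x) := by
  rw [gaussianReal_of_var_ne_zero _ hv, gaussianPDF_def]
  have hmeas : Measurable fun x => (gaussianPDFReal 0 v x).toNNReal :=
    (measurable_gaussianPDFReal 0 v).real_toNNReal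
  rw [show (fun x => ENNReal.ofReal (gaussianPDFReal 0 v x))
      = fun x => ((gaussianPDFReal 0 v x).toNNReal : ℝ≥0∞) from rfl,
    integrable_withDensity_iff_integrable_smul hmeas]
  constructor <;> intro h <;> [skip; skip] <;>
  · refine h.congr ?_
    filter_upwards with x
    rw [NNReal.smul_def, smul_eq_mul, Real.coe_toNNReal _ (gaussianPDFReal_nonneg 0 v x)]




lemma coe_pos_of_ne {v : ℝ≥0} (hv : v ≠ 0) : (0:ℝ) < v := by
  exact_mod_cast zero_lt_iff.mpr hv

lemma gaussianPDFReal_mul_exp_linear {v : ℝ≥0} (hv : v ≠ 0) (t x : ℝ) :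
    gaussianPDFReal 0 v x * exp (t * x)
      = exp ((v:ℝ) * t ^ 2 / 2) * gaussianPDFReal (t * (v:ℝ)) v x := by
  have hv0 : (0:ℝ) < v := coe_pos_of_ne hv
  have h1 : -(x - 0)^2/(2*(v:ℝ)) + t*x
      = (v:ℝ)*t^2/2 + -(x - t*(v:ℝ))^2/(2*(v:ℝ)) := by
    field_simp
    ring
  simp only [gaussianPDFReal]
  rw [mul_assoc, ← Real.exp_add, mul_left_comm, ← Real.exp_add, h1]

lemma integral_exp_linear {v : ℝ≥0} (hv : v ≠ 0) (t : ℝ) :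
    ∫ x, exp (t * x) ∂(gaussianReal 0 v) = exp ((v:ℝ) * t ^ 2 / 2) := by
  rw [integral_gaussianReal_eq hv]
  simp_rw [gaussianPDFReal_mul_exp_linear hv]
  rw [integral_const_mul, integral_gaussianPDFReal_eq_one _ hv, mul_one]

lemma integrable_exp_linear {v : ℝ≥0} (hv : v ≠ 0) (t : ℝ) :
    Integrable (fun x => exp (t * x)) (gaussianReal 0 v) := by
  rw [integrable_gaussianReal_iff hv]
  have : (fun x => gaussianPDFReal 0 v x * exp (t * x))
      = fun x => exp ((v:ℝ)*t^2/2) * gaussianPDFReal (t * (v:ℝ)) v x :=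
    funext (gaussianPDFReal_mul_exp_linear hv t)
  rw [this]
  exact (integrable_gaussianPDFReal _ _).const_mul _

lemma gaussianPDFReal_mul_exp_sq {v : ℝ≥0} (hv : v ≠ 0) (x : ℝ) :
    gaussianPDFReal 0 v x * exp (5/(18*(v:ℝ)) * x ^ 2)
      = (3/2) * gaussianPDFReal 0 ((9/4 : ℝ≥0) * v) x := by
  have hv0 : (0:ℝ) < v := coe_pos_of_ne hv
  have hwco : (((9/4 : ℝ≥0) * v : ℝ≥0) : ℝ) = 9/4 * (v:ℝ) := by push_cast; ring
  have hsqrt : √(2*π*(((9/4 : ℝ≥0) * v : ℝ≥0):ℝ)) = (3/2) * √(2*π*(v:ℝ)) := by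
    rw [show (2*π*(((9/4:ℝ≥0)*v : ℝ≥0)):ℝ) = (3/2)^2 * (2*π*(v:ℝ)) by rw [hwco]; ring,
      Real.sqrt_mul (by norm_num), Real.sqrt_sq (by norm_num)]
  have hexp : -(x-0)^2/(2*(v:ℝ)) + 5/(18*(v:ℝ))*x^2
      = -(x-0)^2/(2*((((9/4:ℝ≥0)*v : ℝ≥0)):ℝ)) := by
    rw [hwco]
    field_simp
    ring
  simp only [gaussianPDFReal]
  rw [mul_assoc, ← Real.exp_add, hexp, hsqrt]
  have hs : (0:ℝ) < √(2*π*(v:ℝ)) := Real.sqrt_pos.mpr (by positivity)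
  field_simp

lemma integral_exp_sq {v : ℝ≥0} (hv : v ≠ 0) :
    ∫ x, exp (5/(18*(v:ℝ)) * x ^ 2) ∂(gaussianReal 0 v) = 3/2 := by
  rw [integral_gaussianReal_eq hv]
  simp_rw [gaussianPDFReal_mul_exp_sq hv]
  rw [integral_const_mul, integral_gaussianPDFReal_eq_one _ (mul_ne_zero (by norm_num) hv),
    mul_one]

lemma integrable_exp_sq {v : ℝ≥0} (hv : v ≠ 0) :
    Integrable (fun x => exp (5/(18*(v:ℝ)) * x ^ 2)) (gaussianReal 0 v) := by
  rw [integrable_gaussianReal_iff hv]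
  have : (fun x => gaussianPDFReal 0 v x * exp (5/(18*(v:ℝ)) * x ^ 2))
      = fun x => (3/2) * gaussianPDFReal 0 ((9/4 : ℝ≥0) * v) x :=
    funext (gaussianPDFReal_mul_exp_sq hv)
  rw [this]
  exact (integrable_gaussianPDFReal _ _).const_mul _


variable {Ω : Type*} [MeasurableSpace Ω]


lemma chernoff_sq (P : Measure Ω) [IsProbabilityMeasure P]
    (n : ℕ) (σ : ℝ) (hσpos : 0 < σ) (η : Ω → Fin n → ℝ)
    (hηmeas : ∀ i, Measurable fun ω => η ω i)
    (hηind : iIndepFun (fun i ω => η ω i) P)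
    (hηlaw : ∀ i, Measure.map (fun ω => η ω i) P
      = gaussianReal 0 (Real.toNNReal (σ ^ 2))) :
    (P {ω | 9/4*σ^2*n ≤ ∑ i, (η ω i)^2}).toReal ≤ Real.exp (-((n:ℝ)/8)) := by
  set v : ℝ≥0 := Real.toNNReal (σ^2) with hvdef
  have hvco : (v:ℝ) = σ^2 := Real.coe_toNNReal _ (sq_nonneg σ)
  have hvne : v ≠ 0 := by
    rw [hvdef]
    simp only [ne_eq, Real.toNNReal_eq_zero, not_le]
    positivity
  set t : ℝ := 5/(18*σ^2) with htdef
  have ht0 : 0 ≤ t := by positivity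
  have htv : t = 5/(18*(v:ℝ)) := by rw [hvco]
  set Y : Fin n → Ω → ℝ := fun i ω => (η ω i)^2 with hYdef
  have hYmeas : ∀ i, Measurable (Y i) := fun i => (hηmeas i).pow_const 2
  have hYind : iIndepFun Y P :=
    hηind.comp (fun _ (x : ℝ) => x^2) (fun _ => measurable_id.pow_const 2)
  have hintY : ∀ i, Integrable (fun ω => Real.exp (t * Y i ω)) P := by
    intro i
    have h1 : Integrable (fun x => Real.exp (t * x^2))
        (Measure.map (fun ω => η ω i) P) := by
      rw [hηlaw i, htv]
      exact integrable_exp_sq hvne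
    exact (integrable_map_measure
      (Measurable.aestronglyMeasurable (by fun_prop))
      (hηmeas i).aemeasurable).mp h1
  have hmgfY : ∀ i, mgf (Y i) P t = 3/2 := by
    intro i
    have h2 : ∫ x, Real.exp (t * x^2) ∂(Measure.map (fun ω => η ω i) P)
        = ∫ ω, Real.exp (t * (η ω i)^2) ∂P :=
      integral_map (hηmeas i).aemeasurable
        (Measurable.aestronglyMeasurable (by fun_prop))
    rw [mgf, ← h2, hηlaw i, htv]
    exact integral_exp_sq hvne
  have hintSum : Integrable (fun ω => Real.exp (t * (∑ i, Y i) ω)) P :=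
    hYind.integrable_exp_mul_sum hYmeas (fun i _ => hintY i)
  have hchern := measure_ge_le_exp_mul_mgf (μ := P) (X := ∑ i, Y i)
    (9/4*σ^2*n) ht0 hintSum
  rw [hYind.mgf_sum hYmeas Finset.univ] at hchern
  have hprod : ∏ i : Fin n, mgf (Y i) P t = ((3:ℝ)/2)^n := by
    rw [Finset.prod_congr rfl (fun i _ => hmgfY i), Finset.prod_const,
      Finset.card_univ, Fintype.card_fin]
  rw [hprod] at hchern
  have hset : {ω | 9/4*σ^2*n ≤ (∑ i, Y i) ω} = {ω | 9/4*σ^2*n ≤ ∑ i, (η ω i)^2} := by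
    ext ω
    simp [Finset.sum_apply, hYdef]
  rw [hset] at hchern
  refine hchern.trans ?_
  have h32 : (3/2:ℝ) ≤ Real.exp (1/2) := by
    have := Real.add_one_le_exp (1/2:ℝ); linarith
  have hp : ((3:ℝ)/2)^n ≤ Real.exp (1/2:ℝ)^n := pow_le_pow_left₀ (by norm_num) h32 n
  have he1 : Real.exp (1/2:ℝ)^n = Real.exp (n * (1/2)) := (Real.exp_nat_mul _ n).symm
  have he2 : -t * (9/4*σ^2*n) = -(5/8)*n := by
    rw [htdef]; field_simp; ring
  calc Real.exp (-t * (9/4*σ^2*n)) * ((3:ℝ)/2)^n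
      ≤ Real.exp (-(5/8)*n) * Real.exp ((n:ℝ)*(1/2)) := by
        rw [he2]; exact mul_le_mul_of_nonneg_left (hp.trans_eq he1) (Real.exp_pos _).le
    _ = Real.exp (-(5/8)*n + n*(1/2)) := (Real.exp_add _ _).symm
    _ ≤ Real.exp (-((n:ℝ)/8)) := Real.exp_le_exp.mpr (by linarith)

lemma chernoff_lin (P : Measure Ω) [IsProbabilityMeasure P]
    (n : ℕ) (σ : ℝ) (hσpos : 0 < σ) (η : Ω → Fin n → ℝ) (c : Fin n → ℝ)
    (hci : ∀ i, (c i)^2 = 1)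
    (hηmeas : ∀ i, Measurable fun ω => η ω i)
    (hηind : iIndepFun (fun i ω => η ω i) P)
    (hηlaw : ∀ i, Measure.map (fun ω => η ω i) P
      = gaussianReal 0 (Real.toNNReal (σ ^ 2))) :
    (P {ω | (n:ℝ)*σ/2 ≤ ∑ i, c i * η ω i}).toReal ≤ Real.exp (-((n:ℝ)/8)) := by
  set v : ℝ≥0 := Real.toNNReal (σ^2) with hvdef
  have hvco : (v:ℝ) = σ^2 := Real.coe_toNNReal _ (sq_nonneg σ)
  have hvne : v ≠ 0 := by
    rw [hvdef]
    simp only [ne_eq, Real.toNNReal_eq_zero, not_le]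
    positivity
  set t : ℝ := 1/(2*σ) with htdef
  have ht0 : 0 ≤ t := by positivity
  set X : Fin n → Ω → ℝ := fun i ω => c i * η ω i with hXdef
  have hXmeas : ∀ i, Measurable (X i) := fun i => (hηmeas i).const_mul (c i)
  have hXind : iIndepFun X P :=
    hηind.comp (fun i (x : ℝ) => c i * x) (fun i => measurable_id.const_mul (c i))
  have hXrw : ∀ i, (fun ω => Real.exp (t * X i ω))
      = fun ω => Real.exp ((t * c i) * η ω i) := by
    intro i; funext ω; rw [hXdef]; dsimp only; ring_nf
  have hintX : ∀ i, Integrable (fun ω => Real.exp (t * X i ω)) P := by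
    intro i
    have h1 : Integrable (fun x => Real.exp ((t * c i) * x))
        (Measure.map (fun ω => η ω i) P) := by
      rw [hηlaw i]
      exact integrable_exp_linear hvne _
    rw [hXrw i]
    exact (integrable_map_measure
      (Measurable.aestronglyMeasurable (by fun_prop))
      (hηmeas i).aemeasurable).mp h1
  have hmgfX : ∀ i, mgf (X i) P t = Real.exp (σ^2 * t^2 / 2) := by
    intro i
    have h2 : ∫ x, Real.exp ((t * c i) * x) ∂(Measure.map (fun ω => η ω i) P)
        = ∫ ω, Real.exp ((t * c i) * η ω i) ∂P :=
      integral_map (hηmeas i).aemeasurable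
        (Measurable.aestronglyMeasurable (by fun_prop))
    rw [mgf, hXrw i, ← h2, hηlaw i, integral_exp_linear hvne]
    rw [hvco, mul_pow, hci i, mul_one]
  have hintSum : Integrable (fun ω => Real.exp (t * (∑ i, X i) ω)) P :=
    hXind.integrable_exp_mul_sum hXmeas (fun i _ => hintX i)
  have hchern := measure_ge_le_exp_mul_mgf (μ := P) (X := ∑ i, X i)
    ((n:ℝ)*σ/2) ht0 hintSum
  rw [hXind.mgf_sum hXmeas Finset.univ] at hchern
  have hprod : ∏ i : Fin n, mgf (X i) P t = Real.exp (σ^2*t^2/2)^n := by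
    rw [Finset.prod_congr rfl (fun i _ => hmgfX i), Finset.prod_const,
      Finset.card_univ, Fintype.card_fin]
  rw [hprod] at hchern
  have hset : {ω | (n:ℝ)*σ/2 ≤ (∑ i, X i) ω} = {ω | (n:ℝ)*σ/2 ≤ ∑ i, c i * η ω i} := by
    ext ω
    simp [Finset.sum_apply, hXdef]
  rw [hset] at hchern
  refine hchern.trans ?_
  have he1 : Real.exp (σ^2*t^2/2)^n = Real.exp ((n:ℝ) * (σ^2*t^2/2)) :=
    (Real.exp_nat_mul _ n).symm
  have he2 : σ^2*t^2/2 = 1/8 := by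
    rw [htdef]; field_simp; ring
  have he3 : -t * ((n:ℝ)*σ/2) = -((n:ℝ)/4) := by
    rw [htdef]; field_simp; ring
  rw [he1, he2, he3, ← Real.exp_add]
  exact Real.exp_le_exp.mpr (by linarith)


end StrongSignalAux



open MeasureTheory ProbabilityTheory Real Finset
open scoped NNReal ENNReal

/-- **Strong-signal one-sample-per-arm instance: constant improvement.**
For ε = 1/√n and n ≥ 8 log(2/δ), with probability at least 1−δ the empirically
optimal improvement vector satisfies Δ̂_εᵀ r ≥ 1/2 − 2σ. -/
theorem strong_signal_constant_improvement
    {Ω : Type*} [MeasurableSpace Ω] (P : Measure Ω) [IsProbabilityMeasure P]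
    (n : ℕ) (hn : 0 < n) (hneven : Even n)
    (σ : ℝ) (hσ : 0 ≤ σ)
    -- the true mean reward vector: 1 on the first half of the arms, 0 on the rest
    (r : Fin n → ℝ) (hr : ∀ i : Fin n, r i = if (i : ℕ) < n / 2 then 1 else 0)
    -- the noise vector η ~ N(0, σ² I_n)
    (η : Ω → Fin n → ℝ)
    (hηmeas : ∀ i, Measurable fun ω => η ω i)
    (hηind : iIndepFun (fun i ω => η ω i) P)
    (hηlaw : ∀ i, Measure.map (fun ω => η ω i) P
      = gaussianReal 0 (Real.toNNReal (σ ^ 2)))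
    -- the trust region around the uniform reference policy
    (C : ℝ → Set (Fin n → ℝ))
    (hC : ∀ ε, C ε = {Δ | (∀ i, 0 ≤ Δ i + 1 / (n : ℝ)) ∧ (∑ i, Δ i) = 0
      ∧ Real.sqrt (∑ i, (Δ i) ^ 2) ≤ ε})
    -- Δ̂_ε maximizes the empirical return Δᵀr̂ over C(ε), where r̂ = r + η
    (Δhat : Ω → ℝ → Fin n → ℝ)
    (hΔhat : ∀ ω, ∀ ε, 0 ≤ ε → Δhat ω ε ∈ C ε ∧
      ∀ Δ ∈ C ε, ∑ i, Δ i * (r i + η ω i) ≤ ∑ i, Δhat ω ε i * (r i + η ω i))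
    (δ : ℝ) (hδ : 0 < δ) (hδ1 : δ < 1)
    (hnbig : 8 * Real.log (2 / δ) ≤ (n : ℝ)) :
    ENNReal.ofReal (1 - δ) ≤
      P {ω | 1 / 2 - 2 * σ ≤ ∑ i, Δhat ω (1 / Real.sqrt n) i * r i} := by
  classical
  set m := n / 2 with hm
  have hn2 : 2 * m = n := by
    rw [Nat.even_iff] at hneven; omega
  have hm0 : 0 < m := by omega
  have hnR : (0:ℝ) < n := by exact_mod_cast hn
  have hsqn : 0 < Real.sqrt n := Real.sqrt_pos.mpr hnR
  set ε : ℝ := 1 / Real.sqrt n with hεdef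
  have hε0 : 0 ≤ ε := by positivity
  set Δs : Fin n → ℝ := fun i => if (i:ℕ) < m then 1/(n:ℝ) else -(1/(n:ℝ)) with hΔsdef
  set c : Fin n → ℝ := fun i => if (i:ℕ) < m then (-1:ℝ) else 1 with hcdef
  -- sum helper
  have hsum_ite : ∀ a b : ℝ, (∑ i : Fin n, if (i:ℕ) < m then a else b)
      = m * a + m * b := by
    intro a b
    rw [Fin.sum_univ_eq_sum_range (fun j => if j < m then a else b) n, Finset.sum_ite]
    have h1 : (Finset.range n).filter (fun j => j < m) = Finset.range m := by
      ext j; simp only [Finset.mem_filter, Finset.mem_range]; omega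
    have h2 : ((Finset.range n).filter (fun j => ¬ j < m)).card = m := by
      have h3 := Finset.card_filter_add_card_filter_not
        (s := Finset.range n) (p := fun j => j < m)
      rw [h1] at h3
      simp only [Finset.card_range] at h3
      omega
    rw [h1]
    simp only [Finset.sum_const, Finset.card_range, h2, nsmul_eq_mul]
  have hΔs_sum : ∑ i, Δs i = 0 := by
    rw [hΔsdef]
    rw [show (∑ i : Fin n, if (i:ℕ) < m then 1/(n:ℝ) else -(1/(n:ℝ)))
        = (m:ℝ) * (1/(n:ℝ)) + m * (-(1/(n:ℝ))) from hsum_ite _ _]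
    ring
  have hΔs_sq : ∑ i, (Δs i)^2 = 1/(n:ℝ) := by
    have h1 : ∀ i : Fin n, (Δs i)^2 = 1/(n:ℝ)^2 := by
      intro i; rw [hΔsdef]; dsimp only; split <;> ring
    rw [Finset.sum_congr rfl (fun i _ => h1 i)]
    rw [Finset.sum_const, Finset.card_univ, Fintype.card_fin, nsmul_eq_mul]
    field_simp
  have hΔs_mem : Δs ∈ C ε := by
    rw [hC]
    refine ⟨?_, hΔs_sum, ?_⟩
    · intro i
      have : 0 ≤ 1/(n:ℝ) := by positivity
      rw [hΔsdef]; dsimp only; split <;> linarith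
    · rw [hΔs_sq, hεdef, one_div, one_div, Real.sqrt_inv]
  have hΔs_r : ∑ i, Δs i * r i = 1/2 := by
    have h1 : ∀ i : Fin n, Δs i * r i = if (i:ℕ) < m then 1/(n:ℝ) else 0 := by
      intro i; rw [hr i, hΔsdef]; dsimp only; split <;> ring
    rw [Finset.sum_congr rfl (fun i _ => h1 i), hsum_ite]
    have : (n:ℝ) = 2 * m := by exact_mod_cast hn2.symm
    rw [this]
    have hmR : (0:ℝ) < m := by exact_mod_cast hm0
    field_simp
    ring
  have hΔs_c : ∀ i, Δs i = -(1/(n:ℝ)) * c i := by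
    intro i; rw [hΔsdef, hcdef]; dsimp only; split <;> ring
  -- pointwise deterministic claim
  have key : ∀ ω : Ω, (∑ i, (η ω i)^2 ≤ 9/4*σ^2*n) → ((∑ i, c i * η ω i) ≤ n*σ/2) →
      1/2 - 2*σ ≤ ∑ i, Δhat ω ε i * r i := by
    intro ω hA hB
    obtain ⟨hmem, hopt⟩ := hΔhat ω ε hε0
    rw [hC] at hmem
    obtain ⟨hpos, hzero, hnorm⟩ := hmem
    have hopt' := hopt Δs hΔs_mem
    have hexp1 : ∑ i, Δs i * (r i + η ω i) = 1/2 + ∑ i, Δs i * η ω i := by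
      simp_rw [mul_add]; rw [Finset.sum_add_distrib, hΔs_r]
    have hexp2 : ∑ i, Δhat ω ε i * (r i + η ω i)
        = (∑ i, Δhat ω ε i * r i) + ∑ i, Δhat ω ε i * η ω i := by
      simp_rw [mul_add]; rw [Finset.sum_add_distrib]
    have h3 : ∑ i, Δs i * η ω i = -(1/(n:ℝ)) * ∑ i, c i * η ω i := by
      rw [Finset.mul_sum]
      exact Finset.sum_congr rfl fun i _ => by rw [hΔs_c i]; ring
    have h4 : -(σ/2) ≤ ∑ i, Δs i * η ω i := by
      rw [h3]
      have h5 : (1/(n:ℝ)) * (∑ i, c i * η ω i) ≤ (1/(n:ℝ)) * (n*σ/2) :=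
        mul_le_mul_of_nonneg_left hB (by positivity)
      have h6 : (1/(n:ℝ)) * (n*σ/2) = σ/2 := by field_simp
      rw [h6] at h5
      linarith
    have hD2 : ∑ i, (Δhat ω ε i)^2 ≤ 1/(n:ℝ) := by
      have hnn : 0 ≤ ∑ i, (Δhat ω ε i)^2 :=
        Finset.sum_nonneg (fun i _ => sq_nonneg _)
      calc ∑ i, (Δhat ω ε i)^2 = (Real.sqrt (∑ i, (Δhat ω ε i)^2))^2 :=
            (Real.sq_sqrt hnn).symm
        _ ≤ ε^2 := pow_le_pow_left₀ (Real.sqrt_nonneg _) hnorm 2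
        _ = 1/(n:ℝ) := by rw [hεdef, div_pow, one_pow, Real.sq_sqrt hnR.le]
    have hcs := Finset.sum_mul_sq_le_sq_mul_sq Finset.univ (Δhat ω ε) (η ω)
    have hS2 : (0:ℝ) ≤ ∑ i, (η ω i)^2 := Finset.sum_nonneg (fun i _ => sq_nonneg _)
    have h7 : (∑ i, Δhat ω ε i * η ω i)^2 ≤ 9/4*σ^2 := by
      have h8 : (∑ i, (Δhat ω ε i)^2) * (∑ i, (η ω i)^2) ≤ (1/(n:ℝ)) * (9/4*σ^2*n) := by
        exact mul_le_mul hD2 hA hS2 (by positivity)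
      have h9 : (1/(n:ℝ)) * (9/4*σ^2*n) = 9/4*σ^2 := by field_simp
      calc (∑ i, Δhat ω ε i * η ω i)^2
          ≤ (∑ i, (Δhat ω ε i)^2) * (∑ i, (η ω i)^2) := hcs
        _ ≤ 9/4*σ^2 := by rw [← h9]; exact h8
    have h5 : ∑ i, Δhat ω ε i * η ω i ≤ 3/2*σ := by
      nlinarith [h7, hσ, sq_nonneg ((∑ i, Δhat ω ε i * η ω i) + 3/2*σ)]
    rw [hexp1, hexp2] at hopt'
    linarith
  -- events
  set A : Set Ω := {ω | ∑ i, (η ω i)^2 ≤ 9/4*σ^2*n} with hAdef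
  set B : Set Ω := {ω | (∑ i, c i * η ω i) ≤ n*σ/2} with hBdef
  have hmeasSum2 : Measurable fun ω => ∑ i, (η ω i)^2 :=
    Finset.measurable_sum _ (fun i _ => ((hηmeas i).pow_const 2))
  have hmeasSumc : Measurable fun ω => ∑ i, c i * η ω i :=
    Finset.measurable_sum _ (fun i _ => ((hηmeas i).const_mul (c i)))
  have hmeasA : MeasurableSet A := measurableSet_le hmeasSum2 measurable_const
  have hmeasB : MeasurableSet B := measurableSet_le hmeasSumc measurable_const
  have hexp_small : Real.exp (-((n:ℝ)/8)) ≤ δ/2 := by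
    have h1 : Real.log (2/δ) ≤ (n:ℝ)/8 := by linarith
    have h2 : 2/δ ≤ Real.exp ((n:ℝ)/8) := by
      rw [← Real.exp_log (show (0:ℝ) < 2/δ by positivity)]
      exact Real.exp_le_exp.mpr h1
    rw [div_le_iff₀ hδ] at h2
    have h3 : Real.exp (-((n:ℝ)/8)) * Real.exp ((n:ℝ)/8) = 1 := by
      rw [← Real.exp_add]; simp
    have h5 : 0 < Real.exp (-((n:ℝ)/8)) := Real.exp_pos _
    nlinarith
  have hae0 : σ = 0 → P {ω | ¬ ∀ i : Fin n, η ω i = 0} = 0 := by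
    intro hσ0
    have hae : ∀ i : Fin n, ∀ᵐ ω ∂P, η ω i = 0 := by
      intro i
      rw [ae_iff]
      have hset : {ω | ¬ η ω i = 0} = (fun ω => η ω i) ⁻¹' ({(0:ℝ)}ᶜ : Set ℝ) := rfl
      rw [hset, ← Measure.map_apply (hηmeas i) (measurableSet_singleton (0:ℝ)).compl,
        hηlaw i, hσ0]
      norm_num
    exact ae_iff.mp (ae_all_iff.mpr hae)
  -- tail bound for A
  have hPA : P Aᶜ ≤ ENNReal.ofReal (δ/2) := by
    rcases hσ.eq_or_lt with hσ0 | hσpos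
    · have hsub0 : Aᶜ ⊆ {ω | ¬ ∀ i : Fin n, η ω i = 0} := by
        intro ω hω
        simp only [hAdef, Set.mem_compl_iff, Set.mem_setOf_eq] at hω ⊢
        intro hall
        apply hω
        have hz : ∑ i, (η ω i)^2 = 0 :=
          Finset.sum_eq_zero (fun i _ => by rw [hall i]; ring)
        rw [hz, ← hσ0]
        norm_num
      refine le_trans (measure_mono hsub0) ?_
      rw [hae0 hσ0.symm]
      exact zero_le
    · have hsubA : Aᶜ ⊆ {ω | 9/4*σ^2*(n:ℝ) ≤ ∑ i, (η ω i)^2} := by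
        intro ω hω
        simp only [hAdef, Set.mem_compl_iff, Set.mem_setOf_eq, not_le] at hω
        exact le_of_lt hω
      calc P Aᶜ ≤ P {ω | 9/4*σ^2*(n:ℝ) ≤ ∑ i, (η ω i)^2} := measure_mono hsubA
        _ = ENNReal.ofReal ((P {ω | 9/4*σ^2*(n:ℝ) ≤ ∑ i, (η ω i)^2}).toReal) :=
            (ENNReal.ofReal_toReal (measure_ne_top _ _)).symm
        _ ≤ ENNReal.ofReal (δ/2) := ENNReal.ofReal_le_ofReal
            ((StrongSignalAux.chernoff_sq P n σ hσpos η hηmeas hηind hηlaw).trans hexp_small)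
  -- tail bound for B
  have hPB : P Bᶜ ≤ ENNReal.ofReal (δ/2) := by
    rcases hσ.eq_or_lt with hσ0 | hσpos
    · have hsub0 : Bᶜ ⊆ {ω | ¬ ∀ i : Fin n, η ω i = 0} := by
        intro ω hω
        simp only [hBdef, Set.mem_compl_iff, Set.mem_setOf_eq] at hω ⊢
        intro hall
        apply hω
        have hz : ∑ i, c i * η ω i = 0 :=
          Finset.sum_eq_zero (fun i _ => by rw [hall i]; ring)
        rw [hz, ← hσ0]
        norm_num
      refine le_trans (measure_mono hsub0) ?_
      rw [hae0 hσ0.symm]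
      exact zero_le
    · have hci : ∀ i, (c i)^2 = 1 := by
        intro i; rw [hcdef]; dsimp only; split <;> norm_num
      have hsubB : Bᶜ ⊆ {ω | (n:ℝ)*σ/2 ≤ ∑ i, c i * η ω i} := by
        intro ω hω
        simp only [hBdef, Set.mem_compl_iff, Set.mem_setOf_eq, not_le] at hω
        exact le_of_lt hω
      calc P Bᶜ ≤ P {ω | (n:ℝ)*σ/2 ≤ ∑ i, c i * η ω i} := measure_mono hsubB
        _ = ENNReal.ofReal ((P {ω | (n:ℝ)*σ/2 ≤ ∑ i, c i * η ω i}).toReal) :=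
            (ENNReal.ofReal_toReal (measure_ne_top _ _)).symm
        _ ≤ ENNReal.ofReal (δ/2) := ENNReal.ofReal_le_ofReal
            ((StrongSignalAux.chernoff_lin P n σ hσpos η c hci hηmeas hηind hηlaw).trans
              hexp_small)
  -- combine
  have hcompl : P ((A ∩ B)ᶜ) ≤ ENNReal.ofReal δ := by
    rw [Set.compl_inter]
    refine le_trans (measure_union_le _ _) (le_trans (add_le_add hPA hPB) ?_)
    rw [← ENNReal.ofReal_add (by linarith) (by linarith)]
    norm_num
  have hsub : A ∩ B ⊆ {ω | 1/2 - 2*σ ≤ ∑ i, Δhat ω ε i * r i} :=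
    fun ω hω => key ω hω.1 hω.2
  have hABm : MeasurableSet (A ∩ B) := hmeasA.inter hmeasB
  have hadd : P (A ∩ B) + P ((A ∩ B)ᶜ) = 1 := by
    rw [measure_add_measure_compl hABm, measure_univ]
  have hPAB : P (A ∩ B) = 1 - P ((A ∩ B)ᶜ) :=
    ENNReal.eq_sub_of_add_eq (measure_ne_top _ _) hadd
  have h0 : ENNReal.ofReal (1-δ) = 1 - ENNReal.ofReal δ := by
    rw [ENNReal.ofReal_sub _ hδ.le, ENNReal.ofReal_one]
  calc ENNReal.ofReal (1-δ) ≤ 1 - ENNReal.ofReal δ := le_of_eq h0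
    _ ≤ 1 - P ((A ∩ B)ᶜ) := tsub_le_tsub_left hcompl 1
    _ = P (A ∩ B) := hPAB.symm
    _ ≤ P {ω | 1/2 - 2*σ ≤ ∑ i, Δhat ω ε i * r i} := measure_mono hsub
end

section
/- With probability at least 1−3δ, the combined policy satisfies V^{π_combined} ≥ max_{i∈[d]} l_i, i.e. its true value is at least the best LCB lower bound. -/
open MeasureTheory ProbabilityTheory Real Finset

open MeasureTheory ProbabilityTheory Real Finset
open scoped NNReal ENNReal

namespace TrustAux

set_option linter.unusedSectionVars false

variable {Ω : Type*} [MeasurableSpace Ω] {P : Measure Ω} [IsProbabilityMeasure P]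

lemma coe_pos_of_ne_zero {v : ℝ≥0} (hv : v ≠ 0) : (0:ℝ) < v := by
  exact_mod_cast zero_lt_iff.mpr hv

lemma pdf_mul_exp {v : ℝ≥0} (hv : v ≠ 0) (t x : ℝ) :
    rexp (t * x) * gaussianPDFReal 0 v x
      = rexp ((v:ℝ) * t ^ 2 / 2) * gaussianPDFReal ((v:ℝ) * t) v x := by
  have hv' : (0:ℝ) < v := coe_pos_of_ne_zero hv
  simp only [gaussianPDFReal, sub_zero]
  rw [show rexp (t*x) * ((√(2*π*(v:ℝ)))⁻¹ * rexp (-x^2/(2*(v:ℝ))))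
      = (√(2*π*(v:ℝ)))⁻¹ * rexp (t*x + -x^2/(2*(v:ℝ))) from by rw [exp_add]; ring]
  rw [show rexp ((v:ℝ)*t^2/2) * ((√(2*π*(v:ℝ)))⁻¹ * rexp (-(x-(v:ℝ)*t)^2/(2*(v:ℝ))))
      = (√(2*π*(v:ℝ)))⁻¹ * rexp ((v:ℝ)*t^2/2 + -(x-(v:ℝ)*t)^2/(2*(v:ℝ))) from by
        rw [exp_add]; ring]
  congr 1
  field_simp
  ring

lemma integrable_exp_gaussian {v : ℝ≥0} (hv : v ≠ 0) (t : ℝ) :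
    Integrable (fun x => rexp (t * x)) (gaussianReal 0 v) := by
  rw [gaussianReal_of_var_ne_zero _ hv]
  rw [integrable_withDensity_iff (measurable_gaussianPDF _ _)
    (ae_of_all _ fun x => ENNReal.ofReal_lt_top)]
  have : (fun x => rexp (t * x) * (gaussianPDF 0 v x).toReal)
      = fun x => rexp ((v:ℝ) * t ^ 2 / 2) * gaussianPDFReal ((v:ℝ) * t) v x := by
    funext x
    rw [gaussianPDF, ENNReal.toReal_ofReal (gaussianPDFReal_nonneg _ _ _), pdf_mul_exp hv]
  rw [this]
  exact (integrable_gaussianPDFReal _ _).const_mul _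

lemma integral_exp_gaussian {v : ℝ≥0} (hv : v ≠ 0) (t : ℝ) :
    (∫ x, rexp (t * x) ∂(gaussianReal 0 v)) = rexp ((v:ℝ) * t ^ 2 / 2) := by
  rw [gaussianReal_of_var_ne_zero _ hv]
  have hcoe : (gaussianPDF 0 v) = fun x => ((gaussianPDFReal 0 v x).toNNReal : ℝ≥0∞) := by
    funext x; rfl
  rw [hcoe, integral_withDensity_eq_integral_smul
    (measurable_gaussianPDFReal 0 v).real_toNNReal]
  have : (fun x => (gaussianPDFReal 0 v x).toNNReal • rexp (t * x))
      = fun x => rexp ((v:ℝ) * t ^ 2 / 2) * gaussianPDFReal ((v:ℝ) * t) v x := by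
    funext x
    rw [NNReal.smul_def, Real.coe_toNNReal _ (gaussianPDFReal_nonneg 0 v x), smul_eq_mul,
      mul_comm (gaussianPDFReal 0 v x), pdf_mul_exp hv]
  rw [this, integral_const_mul, integral_gaussianPDFReal_eq_one _ hv, mul_one]

lemma integrable_exp_of_map {X : Ω → ℝ} (hX : Measurable X) {v : ℝ≥0} (hv : v ≠ 0)
    (hmap : Measure.map X P = gaussianReal 0 v) (t : ℝ) :
    Integrable (fun ω => rexp (t * X ω)) P := by
  have h := integrable_exp_gaussian hv t
  rw [← hmap] at h
  exact (integrable_map_measure ((measurable_id'.const_mul t).exp.aestronglyMeasurable) hX.aemeasurable).mp h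

lemma mgf_of_map {X : Ω → ℝ} (hX : Measurable X) {v : ℝ≥0} (hv : v ≠ 0)
    (hmap : Measure.map X P = gaussianReal 0 v) (t : ℝ) :
    mgf X P t = rexp ((v:ℝ) * t ^ 2 / 2) := by
  have h : ∫ x, rexp (t * x) ∂(Measure.map X P) = ∫ ω, rexp (t * X ω) ∂P :=
    integral_map hX.aemeasurable ((measurable_id'.const_mul t).exp.aestronglyMeasurable)
  rw [mgf]
  simp only []
  rw [← h, hmap, integral_exp_gaussian hv]

lemma gaussian_tail {X : Ω → ℝ} (hX : Measurable X) {v : ℝ≥0} (hv : v ≠ 0)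
    (hmap : Measure.map X P = gaussianReal 0 v) {t : ℝ} (ht : 0 ≤ t) :
    P {ω | t ≤ X ω} ≤ ENNReal.ofReal (rexp (-t ^ 2 / (2 * (v:ℝ)))) := by
  have hv' : (0:ℝ) < v := coe_pos_of_ne_zero hv
  have hint := integrable_exp_of_map hX hv hmap (t / v)
  have h := measure_ge_le_exp_mul_mgf (X := X) (μ := P) (t := t / (v:ℝ)) t
    (by positivity) hint
  rw [mgf_of_map hX hv hmap] at h
  have heq : rexp (-(t/(v:ℝ)) * t) * rexp ((v:ℝ) * (t/(v:ℝ)) ^ 2 / 2)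
      = rexp (-t ^ 2 / (2 * (v:ℝ))) := by
    rw [← exp_add]; congr 1; field_simp; ring
  rw [heq] at h
  calc P {ω | t ≤ X ω} = ENNReal.ofReal (P {ω | t ≤ X ω}).toReal :=
        (ENNReal.ofReal_toReal (measure_ne_top _ _)).symm
    _ ≤ _ := ENNReal.ofReal_le_ofReal h

lemma gaussian_sum_tail {d : ℕ} (hd : 0 < d) {Y : Fin d → Ω → ℝ}
    (hmeas : ∀ i, Measurable (Y i))
    (hind : iIndepFun Y P)
    {v : Fin d → ℝ≥0} (hv : ∀ i, v i ≠ 0)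
    (hmap : ∀ i, Measure.map (Y i) P = gaussianReal 0 (v i))
    {t : ℝ} (ht : 0 ≤ t) :
    P {ω | t ≤ ∑ i, Y i ω} ≤
      ENNReal.ofReal (rexp (-t ^ 2 / (2 * ∑ i, (v i : ℝ)))) := by
  have : Nonempty (Fin d) := Fin.pos_iff_nonempty.mp hd
  set V : ℝ := ∑ i, (v i : ℝ) with hV
  have hVpos : 0 < V := Finset.sum_pos (fun i _ => coe_pos_of_ne_zero (hv i)) univ_nonempty
  set s : ℝ := t / V with hs
  have hint : Integrable (fun ω => rexp (s * (∑ i, Y i) ω)) P :=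
    hind.integrable_exp_mul_sum (fun i => hmeas i)
      (fun i _ => integrable_exp_of_map (hmeas i) (hv i) (hmap i) s)
  have hmgf : mgf (∑ i, Y i) P s = rexp (V * s ^ 2 / 2) := by
    rw [hind.mgf_sum (fun i => hmeas i) univ]
    have : ∀ i ∈ univ, mgf (Y i) P s = rexp ((v i : ℝ) * s ^ 2 / 2) :=
      fun i _ => mgf_of_map (hmeas i) (hv i) (hmap i) s
    rw [Finset.prod_congr rfl this, ← Real.exp_sum]
    congr 1
    rw [← Finset.sum_div, ← Finset.sum_mul]
  have h := measure_ge_le_exp_mul_mgf (X := ∑ i, Y i) (μ := P) (t := s) t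
    (by positivity) hint
  rw [hmgf] at h
  have heq : rexp (-s * t) * rexp (V * s ^ 2 / 2) = rexp (-t ^ 2 / (2 * V)) := by
    rw [← exp_add]; congr 1; rw [hs]; field_simp; ring
  rw [heq] at h
  have hset : {ω | t ≤ ∑ i, Y i ω} = {ω | t ≤ (∑ i, Y i) ω} := by
    ext ω; simp [Finset.sum_apply]
  rw [hset]
  calc P {ω | t ≤ (∑ i, Y i) ω} = ENNReal.ofReal (P {ω | t ≤ (∑ i, Y i) ω}).toReal :=
        (ENNReal.ofReal_toReal (measure_ne_top _ _)).symm
    _ ≤ _ := ENNReal.ofReal_le_ofReal h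

end TrustAux

/-- **The LCB-augmented TRUST policy is at least as good as LCB.**
With probability at least 1−3δ, the true value of the combined policy (which
plays the LCB arm if the LCB lower bound beats the TRUST lower bound, and the
TRUST policy otherwise) is at least the best LCB lower bound max_i l_i. -/
theorem combined_policy_beats_lcb
    {Ω : Type*} [MeasurableSpace Ω] (P : Measure Ω) [IsProbabilityMeasure P]
    (d : ℕ) (hd : 0 < d)
    (N : Fin d → ℕ) (hN : ∀ i, 1 ≤ N i)
    (σ : Fin d → ℝ) (hσ : ∀ i, 0 < σ i)
    (r : Fin d → ℝ)
    -- the noise vector η has independent Gaussian coordinates, η_i ~ N(0, σ_i²/N_i)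
    (η : Ω → Fin d → ℝ)
    (hηmeas : ∀ i, Measurable fun ω => η ω i)
    (hηind : iIndepFun (fun i ω => η ω i) P)
    (hηlaw : ∀ i, Measure.map (fun ω => η ω i) P
      = gaussianReal 0 (Real.toNNReal ((σ i) ^ 2 / (N i : ℝ))))
    -- the reference policy
    (μhat : Fin d → ℝ)
    (hμhat : ∀ i, μhat i = ((N i : ℝ) / (σ i) ^ 2) / (∑ j, (N j : ℝ) / (σ j) ^ 2))
    -- the trust region
    (C : ℝ → Set (Fin d → ℝ))
    (hC : ∀ ε, C ε = {Δ | (∀ i, 0 ≤ Δ i + μhat i) ∧ (∑ i, (Δ i + μhat i)) = 1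
      ∧ ∑ i, (Δ i) ^ 2 * (σ i) ^ 2 / (N i : ℝ) ≤ ε ^ 2})
    -- the largest radius
    (ε₀ : ℝ)
    (hε₀ : ε₀ = ⨆ i, Real.sqrt ((∑ j ∈ Finset.univ.erase i,
        (μhat j) ^ 2 * (σ j) ^ 2 / (N j : ℝ)) + (1 - μhat i) ^ 2 * (σ i) ^ 2 / (N i : ℝ)))
    -- the finite candidate set of radii and the rounding ⌈·⌉ to the grid
    (E : Finset ℝ) (hE : ∀ ε ∈ E, 0 < ε ∧ ε ≤ ε₀) (hε₀E : ε₀ ∈ E)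
    (ceil : ℝ → ℝ)
    (hceil : ∀ ε, 0 < ε → ε ≤ ε₀ →
      ceil ε ∈ E ∧ ε ≤ ceil ε ∧ ∀ ε' ∈ E, ε ≤ ε' → ceil ε ≤ ε')
    (δ : ℝ) (hδ : 0 < δ) (hδ1 : δ < 1)
    -- G is a uniform-in-ε high probability bound on the supremum of the Gaussian process
    (G : ℝ → ℝ)
    (hG : ENNReal.ofReal (1 - δ) ≤
      P {ω | ∀ ε ∈ E, sSup ((fun Δ => ∑ i, Δ i * η ω i) '' C ε) ≤ G ε})
    -- TRUST: Δ̂_ε maximizes the empirical return Δᵀr̂ over C(ε), with r̂ = r + η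
    (Δhat : Ω → ℝ → Fin d → ℝ)
    (hΔhat : ∀ ω, ∀ ε ∈ E, Δhat ω ε ∈ C ε ∧
      ∀ Δ ∈ C ε, ∑ i, Δ i * (r i + η ω i) ≤ ∑ i, Δhat ω ε i * (r i + η ω i))
    -- ε̂* maximizes the penalized objective over the grid E
    (εhat : Ω → ℝ)
    (hεhat : ∀ ω, εhat ω ∈ E ∧ ∀ ε ∈ E,
      (∑ i, Δhat ω ε i * (r i + η ω i)) - G ε
        ≤ (∑ i, Δhat ω (εhat ω) i * (r i + η ω i)) - G (εhat ω))
    -- LCB: l_i = r̂_i − b_i with b_i = sqrt((2σ_i²/N_i) log(2d/δ)),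
    -- and â_LCB maximizes l_i
    (l : Ω → Fin d → ℝ)
    (hl : ∀ ω i, l ω i = (r i + η ω i)
      - Real.sqrt ((2 * (σ i) ^ 2 / (N i : ℝ)) * Real.log (2 * d / δ)))
    (aLCB : Ω → Fin d) (haLCB : ∀ ω i, l ω i ≤ l ω (aLCB ω))
    -- the TRUST lower bound L_TR
    (LTR : Ω → ℝ)
    (hLTR : ∀ ω, LTR ω = (∑ i, (μhat i + Δhat ω (εhat ω) i) * (r i + η ω i))
      - G (ceil (εhat ω))
      - Real.sqrt (2 * Real.log (1 / δ) / (∑ j, (N j : ℝ) / (σ j) ^ 2)))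
    -- the combined policy
    (πcomb : Ω → Fin d → ℝ)
    (hπcomb : ∀ ω, πcomb ω = if LTR ω ≤ ⨆ i, l ω i
      then (fun i => if i = aLCB ω then (1 : ℝ) else 0)
      else (fun i => μhat i + Δhat ω (εhat ω) i)) :
    ENNReal.ofReal (1 - 3 * δ) ≤
      P {ω | (⨆ i, l ω i) ≤ ∑ i, πcomb ω i * r i} := by
  classical
  have hdne : Nonempty (Fin d) := Fin.pos_iff_nonempty.mp hd
  have hdR : (0:ℝ) < d := Nat.cast_pos.mpr hd
  have hNpos : ∀ i, (0:ℝ) < N i := fun i => by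
    have := hN i; exact_mod_cast Nat.lt_of_lt_of_le Nat.zero_lt_one this
  set T : ℝ := ∑ j, (N j : ℝ) / (σ j) ^ 2 with hT
  have hTpos : 0 < T :=
    Finset.sum_pos (fun j _ => div_pos (hNpos j) (pow_pos (hσ j) 2)) univ_nonempty
  set v : Fin d → ℝ≥0 := fun i => Real.toNNReal ((σ i) ^ 2 / (N i : ℝ)) with hv
  have hvpos : ∀ i, (0:ℝ) < (σ i) ^ 2 / (N i : ℝ) :=
    fun i => div_pos (pow_pos (hσ i) 2) (hNpos i)
  have hvne : ∀ i, v i ≠ 0 := fun i => by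
    simp only [hv, ne_eq, Real.toNNReal_eq_zero, not_le]
    exact hvpos i
  have hvcoe : ∀ i, ((v i : ℝ)) = (σ i) ^ 2 / (N i : ℝ) :=
    fun i => Real.coe_toNNReal _ (hvpos i).le
  set t3 : ℝ := Real.sqrt (2 * Real.log (1 / δ) / T) with ht3
  have hlog1 : 0 ≤ Real.log (2 * d / δ) := by
    apply Real.log_nonneg
    rw [le_div_iff₀ hδ]
    have hdR1 : (1:ℝ) ≤ d := by exact_mod_cast hd
    nlinarith
  have hlog2 : 0 ≤ Real.log (1 / δ) := by
    apply Real.log_nonneg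
    rw [le_div_iff₀ hδ]; linarith
  set Abad : Set Ω := ⋃ i, {ω | Real.sqrt ((2 * (σ i) ^ 2 / (N i : ℝ))
      * Real.log (2 * d / δ)) ≤ η ω i} with hAbad
  set Cbad : Set Ω := {ω | t3 ≤ ∑ i, μhat i * η ω i} with hCbad
  -- bound on Abad
  have hAbound : P Abad ≤ ENNReal.ofReal (δ / 2) := by
    calc P Abad ≤ ∑' i : Fin d, P {ω | Real.sqrt ((2 * (σ i) ^ 2 / (N i : ℝ))
          * Real.log (2 * d / δ)) ≤ η ω i} := measure_iUnion_le _
      _ = ∑ i, P {ω | Real.sqrt ((2 * (σ i) ^ 2 / (N i : ℝ))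
          * Real.log (2 * d / δ)) ≤ η ω i} := tsum_fintype _
      _ ≤ ∑ _i : Fin d, ENNReal.ofReal (δ / (2 * d)) := by
          apply Finset.sum_le_sum
          intro i _
          have htail := TrustAux.gaussian_tail (P := P) (hηmeas i) (hvne i) (hηlaw i)
            (t := Real.sqrt ((2 * (σ i) ^ 2 / (N i : ℝ)) * Real.log (2 * d / δ)))
            (Real.sqrt_nonneg _)
          refine le_trans htail (le_of_eq ?_)
          congr 1
          have hb2 : Real.sqrt ((2 * (σ i) ^ 2 / (N i : ℝ)) * Real.log (2 * d / δ)) ^ 2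
              = 2 * (v i : ℝ) * Real.log (2 * d / δ) := by
            rw [Real.sq_sqrt (mul_nonneg (by positivity) hlog1), hvcoe i]; ring
          have h2v : (2 * (v i : ℝ)) ≠ 0 :=
            ne_of_gt (by linarith [TrustAux.coe_pos_of_ne_zero (hvne i)])
          rw [hb2, neg_div, mul_div_cancel_left₀ _ h2v, Real.exp_neg,
            Real.exp_log (div_pos (by linarith) hδ), inv_div]
      _ = (d : ℝ≥0∞) * ENNReal.ofReal (δ / (2 * d)) := by
          rw [Finset.sum_const, Finset.card_univ, Fintype.card_fin, nsmul_eq_mul]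
      _ = ENNReal.ofReal (δ / 2) := by
          rw [← ENNReal.ofReal_natCast d, ← ENNReal.ofReal_mul (by positivity)]
          congr 1
          field_simp
  -- bound on Cbad
  have hμpos : ∀ i, 0 < μhat i := fun i => by
    rw [hμhat i]; exact div_pos (div_pos (hNpos i) (pow_pos (hσ i) 2)) hTpos
  have hCbound : P Cbad ≤ ENNReal.ofReal δ := by
    set w : Fin d → ℝ≥0 := fun i => Real.toNNReal ((μhat i) ^ 2) * v i with hw
    have hwne : ∀ i, w i ≠ 0 := by
      intro i
      refine mul_ne_zero ?_ (hvne i)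
      simp only [ne_eq, Real.toNNReal_eq_zero, not_le]
      exact pow_pos (hμpos i) 2
    have hwcoe : ∀ i, (w i : ℝ) = (μhat i) ^ 2 * ((σ i) ^ 2 / (N i : ℝ)) := by
      intro i
      rw [hw, NNReal.coe_mul, Real.coe_toNNReal _ (sq_nonneg _), hvcoe i]
    have hwsum : ∑ i, (w i : ℝ) = 1 / T := by
      have hstep : ∀ i ∈ univ, (w i : ℝ) = ((N i : ℝ) / (σ i) ^ 2) / T ^ 2 := by
        intro i _
        rw [hwcoe i, hμhat i]
        have hσne := (hσ i).ne'
        have hNne := (hNpos i).ne'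
        have hTne := hTpos.ne'
        field_simp
      rw [Finset.sum_congr rfl hstep, ← Finset.sum_div, ← hT]
      rw [pow_two]
      rw [div_mul_eq_div_div, div_self hTpos.ne']
    have hmapY : ∀ i, Measure.map (fun ω => μhat i * η ω i) P = gaussianReal 0 (w i) := by
      intro i
      rw [show (fun ω => μhat i * η ω i) = (fun x => μhat i * x) ∘ (fun ω => η ω i) from rfl,
        ← Measure.map_map (by fun_prop : Measurable fun x : ℝ => μhat i * x) (hηmeas i),
        hηlaw i]
      have h := gaussianReal_map_const_mul (μ := 0) (v := v i) (μhat i)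
      rw [mul_zero] at h
      rw [hw]
      simp only []
      rw [Real.toNNReal_of_nonneg (sq_nonneg (μhat i))]
      exact h
    have htail := TrustAux.gaussian_sum_tail (P := P) hd
      (Y := fun i ω => μhat i * η ω i)
      (fun i => (hηmeas i).const_mul (μhat i))
      (hηind.comp (fun i x => μhat i * x) (fun i => measurable_id.const_mul (μhat i)))
      hwne hmapY (t := t3) (Real.sqrt_nonneg _)
    refine le_trans htail (le_of_eq ?_)
    congr 1
    have ht32 : t3 ^ 2 = 2 * Real.log (1 / δ) / T :=
      Real.sq_sqrt (div_nonneg (by linarith) hTpos.le)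
    have hTne := hTpos.ne'
    have heq : -t3 ^ 2 / (2 * ∑ i, (w i : ℝ)) = -Real.log (1 / δ) := by
      rw [ht32, hwsum]
      field_simp
    rw [heq, Real.exp_neg, Real.exp_log (one_div_pos.mpr hδ), one_div, inv_inv]
  -- main inclusion
  have hincl : {ω | ∀ ε ∈ E, sSup ((fun Δ => ∑ i, Δ i * η ω i) '' C ε) ≤ G ε}
      ⊆ {ω | (⨆ i, l ω i) ≤ ∑ i, πcomb ω i * r i} ∪ (Abad ∪ Cbad) := by
    intro ω hω
    by_cases hA : ω ∈ Abad
    · exact Or.inr (Or.inl hA)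
    by_cases hCb : ω ∈ Cbad
    · exact Or.inr (Or.inr hCb)
    left
    simp only [hAbad, Set.mem_iUnion, Set.mem_setOf_eq, not_exists, not_le] at hA
    have hηb : ∀ i, η ω i ≤ Real.sqrt ((2 * (σ i) ^ 2 / (N i : ℝ))
        * Real.log (2 * d / δ)) := fun i => (hA i).le
    simp only [hCbad, Set.mem_setOf_eq, not_le] at hCb
    have hμη : ∑ i, μhat i * η ω i ≤ t3 := hCb.le
    have hBω : ∀ ε ∈ E, sSup ((fun Δ => ∑ i, Δ i * η ω i) '' C ε) ≤ G ε := hω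
    show (⨆ i, l ω i) ≤ ∑ i, πcomb ω i * r i
    by_cases hcase : LTR ω ≤ ⨆ i, l ω i
    · have hπval := hπcomb ω
      rw [if_pos hcase] at hπval
      have hsum : ∑ i, πcomb ω i * r i = r (aLCB ω) := by
        have hsum0 : ∑ i, πcomb ω i * r i
            = ∑ i, (if i = aLCB ω then (1:ℝ) else 0) * r i :=
          Finset.sum_congr rfl fun i _ => by simp only [hπval]
        rw [hsum0]
        simp
      rw [hsum]
      refine ciSup_le fun i => le_trans (haLCB ω i) ?_
      rw [hl ω (aLCB ω)]
      linarith [hηb (aLCB ω)]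
    · have hπval := hπcomb ω
      rw [if_neg hcase] at hπval
      obtain ⟨hεE, -⟩ := hεhat ω
      obtain ⟨hΔmem, -⟩ := hΔhat ω (εhat ω) hεE
      obtain ⟨hεpos, hεle⟩ := hE _ hεE
      obtain ⟨-, hceil2, hceil3⟩ := hceil (εhat ω) hεpos hεle
      have hceileq : ceil (εhat ω) = εhat ω := le_antisymm (hceil3 _ hεE le_rfl) hceil2
      have hbdd : BddAbove ((fun Δ => ∑ i, Δ i * η ω i) '' C (εhat ω)) := by
        refine ⟨∑ i, (εhat ω * Real.sqrt (N i) / σ i) * |η ω i|, ?_⟩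
        rintro y ⟨Δ, hΔ, rfl⟩
        rw [hC] at hΔ
        obtain ⟨-, -, h3⟩ := hΔ
        calc ∑ i, Δ i * η ω i ≤ ∑ i, |Δ i * η ω i| :=
              Finset.sum_le_sum fun i _ => le_abs_self _
          _ ≤ ∑ i, (εhat ω * Real.sqrt (N i) / σ i) * |η ω i| := by
              apply Finset.sum_le_sum
              intro i _
              rw [abs_mul]
              refine mul_le_mul_of_nonneg_right ?_ (abs_nonneg _)
              have hterm : (Δ i) ^ 2 * (σ i) ^ 2 / (N i : ℝ) ≤ (εhat ω) ^ 2 :=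
                le_trans (Finset.single_le_sum
                  (f := fun j => (Δ j) ^ 2 * (σ j) ^ 2 / (N j : ℝ))
                  (fun j _ => by positivity) (Finset.mem_univ i)) h3
              rw [div_le_iff₀ (hNpos i)] at hterm
              have hsq : (Δ i) ^ 2 ≤ (εhat ω) ^ 2 * (N i : ℝ) / (σ i) ^ 2 := by
                rw [le_div_iff₀ (pow_pos (hσ i) 2)]
                linarith
              have hnn : 0 ≤ εhat ω * Real.sqrt (N i) / σ i :=
                div_nonneg (mul_nonneg hεpos.le (Real.sqrt_nonneg _)) (hσ i).le
              calc |Δ i| = Real.sqrt ((Δ i) ^ 2) := (Real.sqrt_sq_eq_abs _).symm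
                _ ≤ Real.sqrt ((εhat ω) ^ 2 * (N i : ℝ) / (σ i) ^ 2) :=
                    Real.sqrt_le_sqrt hsq
                _ = εhat ω * Real.sqrt (N i) / σ i := by
                    rw [show (εhat ω) ^ 2 * (N i : ℝ) / (σ i) ^ 2
                        = (εhat ω * Real.sqrt (N i) / σ i) ^ 2 from by
                      rw [div_pow, mul_pow, Real.sq_sqrt (Nat.cast_nonneg _)]]
                    exact Real.sqrt_sq hnn
      have hΔη : ∑ i, Δhat ω (εhat ω) i * η ω i ≤ G (εhat ω) :=
        le_trans (le_csSup hbdd ⟨_, hΔmem, rfl⟩) (hBω _ hεE)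
      have hπsum : ∑ i, πcomb ω i * r i
          = (∑ i, (μhat i + Δhat ω (εhat ω) i) * (r i + η ω i))
            - (∑ i, μhat i * η ω i) - (∑ i, Δhat ω (εhat ω) i * η ω i) := by
        have hsum0 : ∑ i, πcomb ω i * r i
            = ∑ i, (μhat i + Δhat ω (εhat ω) i) * r i :=
          Finset.sum_congr rfl fun i _ => by simp only [hπval]
        rw [hsum0, ← Finset.sum_sub_distrib, ← Finset.sum_sub_distrib]
        exact Finset.sum_congr rfl fun i _ => by ring
      have hLTRle : LTR ω ≤ ∑ i, πcomb ω i * r i := by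
        rw [hLTR ω, hceileq, hπsum]
        linarith [hμη, hΔη]
      exact le_trans (le_of_lt (lt_of_not_ge hcase)) hLTRle
  have hchain : ENNReal.ofReal (1 - δ) ≤
      P {ω | (⨆ i, l ω i) ≤ ∑ i, πcomb ω i * r i} + ENNReal.ofReal (δ / 2 + δ) := by
    calc ENNReal.ofReal (1 - δ)
        ≤ P {ω | ∀ ε ∈ E, sSup ((fun Δ => ∑ i, Δ i * η ω i) '' C ε) ≤ G ε} := hG
      _ ≤ P ({ω | (⨆ i, l ω i) ≤ ∑ i, πcomb ω i * r i} ∪ (Abad ∪ Cbad)) :=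
          measure_mono hincl
      _ ≤ P {ω | (⨆ i, l ω i) ≤ ∑ i, πcomb ω i * r i} + P (Abad ∪ Cbad) :=
          measure_union_le _ _
      _ ≤ P {ω | (⨆ i, l ω i) ≤ ∑ i, πcomb ω i * r i} + (P Abad + P Cbad) :=
          add_le_add le_rfl (measure_union_le _ _)
      _ ≤ P {ω | (⨆ i, l ω i) ≤ ∑ i, πcomb ω i * r i}
          + (ENNReal.ofReal (δ / 2) + ENNReal.ofReal δ) :=
          add_le_add le_rfl (add_le_add hAbound hCbound)
      _ = _ := by rw [ENNReal.ofReal_add (by positivity) hδ.le]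
  calc ENNReal.ofReal (1 - 3 * δ)
      ≤ ENNReal.ofReal ((1 - δ) - (δ / 2 + δ)) := ENNReal.ofReal_le_ofReal (by linarith)
    _ = ENNReal.ofReal (1 - δ) - ENNReal.ofReal (δ / 2 + δ) :=
        ENNReal.ofReal_sub _ (by positivity)
    _ ≤ P {ω | (⨆ i, l ω i) ≤ ∑ i, πcomb ω i * r i} := tsub_le_iff_right.mpr hchain
end

section
/- With probability at least 1−δ (jointly over the real noise η and the Monte-Carlo samples), simultaneously for every ε ∈ E one has sup_{Δ∈C(ε)} Δᵀη ≤ X_{(M−M₀+1)}(ε), i.e. the (M−M₀+1)-th order statistic of the Monte-Carlo suprema is a valid uniform upper bound. -/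
open MeasureTheory ProbabilityTheory Real Finset
open scoped ENNReal NNReal


lemma mc_sup_bddAbove {d : ℕ} (K : Set (Fin d → ℝ)) (hbd : ∀ Δ ∈ K, ∀ i, |Δ i| ≤ 1)
    (η : Fin d → ℝ) : ∀ x ∈ (fun Δ => ∑ i, Δ i * η i) '' K, x ≤ ∑ i, |η i| := by
  rintro x ⟨Δ, hΔ, rfl⟩
  calc ∑ i, Δ i * η i ≤ ∑ i, |η i| := by
        refine Finset.sum_le_sum fun i _ => ?_
        calc Δ i * η i ≤ |Δ i * η i| := le_abs_self _
        _ = |Δ i| * |η i| := abs_mul _ _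
        _ ≤ 1 * |η i| := by
            exact mul_le_mul_of_nonneg_right (hbd Δ hΔ i) (abs_nonneg _)
        _ = |η i| := one_mul _

lemma mc_sup_key {d : ℕ} (K : Set (Fin d → ℝ)) (hne : K.Nonempty)
    (hbd : ∀ Δ ∈ K, ∀ i, |Δ i| ≤ 1) (η η' : Fin d → ℝ) :
    sSup ((fun Δ => ∑ i, Δ i * η i) '' K)
      ≤ sSup ((fun Δ => ∑ i, Δ i * η' i) '' K) + ∑ i, |η i - η' i| := by
  refine csSup_le (hne.image _) ?_
  rintro x ⟨Δ, hΔ, rfl⟩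
  have h1 : ∑ i, Δ i * η' i ≤ sSup ((fun Δ => ∑ i, Δ i * η' i) '' K) :=
    le_csSup ⟨∑ i, |η' i|, fun x hx => mc_sup_bddAbove K hbd η' x hx⟩
      (Set.mem_image_of_mem _ hΔ)
  have h2 : ∑ i, Δ i * (η i - η' i) ≤ ∑ i, |η i - η' i| := by
    refine Finset.sum_le_sum fun i _ => ?_
    calc Δ i * (η i - η' i) ≤ |Δ i * (η i - η' i)| := le_abs_self _
    _ = |Δ i| * |η i - η' i| := abs_mul _ _
    _ ≤ 1 * |η i - η' i| := mul_le_mul_of_nonneg_right (hbd Δ hΔ i) (abs_nonneg _)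
    _ = |η i - η' i| := one_mul _
  have : ∑ i, Δ i * η i = ∑ i, Δ i * η' i + ∑ i, Δ i * (η i - η' i) := by
    rw [← Finset.sum_add_distrib]; congr 1; ext i; ring
  linarith

lemma mc_sup_continuous {d : ℕ} (K : Set (Fin d → ℝ)) (hne : K.Nonempty)
    (hbd : ∀ Δ ∈ K, ∀ i, |Δ i| ≤ 1) :
    Continuous (fun η : Fin d → ℝ => sSup ((fun Δ => ∑ i, Δ i * η i) '' K)) := by
  have hlip : LipschitzWith d (fun η : Fin d → ℝ => sSup ((fun Δ => ∑ i, Δ i * η i) '' K)) := by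
    refine LipschitzWith.of_dist_le_mul fun η η' => ?_
    have hsum : ∀ a b : Fin d → ℝ, ∑ i, |a i - b i| ≤ d * dist a b := by
      intro a b
      calc ∑ i, |a i - b i| ≤ ∑ _i : Fin d, dist a b := by
            refine Finset.sum_le_sum fun i _ => ?_
            rw [← Real.dist_eq]; exact dist_le_pi_dist a b i
      _ = d * dist a b := by simp [Finset.sum_const, nsmul_eq_mul]
    rw [Real.dist_eq, abs_sub_le_iff]
    constructor
    · have := mc_sup_key K hne hbd η η'
      have := hsum η η'
      push_cast
      linarith
    · have := mc_sup_key K hne hbd η' η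
      have := hsum η' η
      rw [dist_comm η η'] at *
      push_cast
      linarith
  exact hlip.continuous


lemma mc_block_law {Ω : Type*} [MeasurableSpace Ω] (P : Measure Ω) [IsProbabilityMeasure P]
    {n d : ℕ} (ζ : Ω → Fin n → Fin d → ℝ)
    (hmeas : ∀ k i, Measurable fun ω => ζ ω k i)
    (hind : iIndepFun (fun (p : Fin n × Fin d) ω => ζ ω p.1 p.2) P)
    (G : Fin d → Measure ℝ) [∀ i, IsProbabilityMeasure (G i)]
    (hlaw : ∀ k i, Measure.map (fun ω => ζ ω k i) P = G i) (k : Fin n) :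
    Measure.map (fun ω => ζ ω k) P = Measure.pi G := by
  refine (Measure.pi_eq (μ := G) fun s hs => ?_).symm
  rw [Measure.map_apply (measurable_pi_lambda _ fun i => hmeas k i)
    (MeasurableSet.univ_pi hs)]
  have hpre : (fun ω => ζ ω k) ⁻¹' Set.pi Set.univ s
      = ⋂ p ∈ (Finset.univ.map ⟨fun i : Fin d => (k, i), fun a b h => by
          simpa using h⟩ : Finset (Fin n × Fin d)), (fun ω => ζ ω p.1 p.2) ⁻¹' s p.2 := by
    ext ω
    simp [Set.mem_pi]
    exact Iff.rfl
  rw [hpre, hind.measure_inter_preimage_eq_mul _ (fun p _ => hs p.2), Finset.prod_map]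
  refine Finset.prod_congr rfl fun i _ => ?_
  show P ((fun ω => ζ ω k i) ⁻¹' s i) = _
  rw [← Measure.map_apply (hmeas k i) (hs i), hlaw k i]


lemma mc_blocks_prod {Ω : Type*} [MeasurableSpace Ω] (P : Measure Ω) [IsProbabilityMeasure P]
    {n d : ℕ} (ζ : Ω → Fin n → Fin d → ℝ)
    (hmeas : ∀ k i, Measurable fun ω => ζ ω k i)
    (hind : iIndepFun (fun (p : Fin n × Fin d) ω => ζ ω p.1 p.2) P)
    (B : Fin n → Set (Fin d → ℝ)) (hB : ∀ k, MeasurableSet (B k)) :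
    ∀ u : Finset (Fin n),
    P (⋂ k ∈ u, (fun ω => ζ ω k) ⁻¹' B k) = ∏ k ∈ u, P ((fun ω => ζ ω k) ⁻¹' B k) := by
  classical
  intro u
  induction u using Finset.induction_on with
  | empty => simp
  | @insert k u hk IH =>
    set S : Finset (Fin n × Fin d) := {k} ×ˢ Finset.univ with hS
    set T : Finset (Fin n × Fin d) := u ×ˢ Finset.univ with hT
    have hST : Disjoint S T := by
      rw [Finset.disjoint_left]
      rintro ⟨a, b⟩ haS haT
      simp only [hS, hT, Finset.mem_product, Finset.mem_singleton] at haS haT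
      exact hk (haS.1 ▸ haT.1)
    have h2 := hind.indepFun_finset S T hST (fun p => hmeas p.1 p.2)
    -- the "S" side
    have hkS : ∀ i : Fin d, (k, i) ∈ S := by intro i; simp [hS]
    set ΦS : ((p : ↥S) → ℝ) → (Fin d → ℝ) := fun v i => v ⟨(k, i), hkS i⟩ with hΦS
    have hΦSmeas : Measurable ΦS :=
      measurable_pi_lambda _ fun i => measurable_pi_apply _
    have hSeq : (fun ω => ζ ω k) ⁻¹' B k
        = (fun a (i : ↥S) => ζ a (i : Fin n × Fin d).1 (i : Fin n × Fin d).2) ⁻¹' (ΦS ⁻¹' B k) := by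
      ext ω; simp [hΦS]
    -- the "T" side
    set Ψ : ((p : ↥T) → ℝ) → (Fin n → Fin d → ℝ) := fun v j i =>
      if h : (j, i) ∈ T then v ⟨(j, i), h⟩ else 0 with hΨ
    have hΨmeas : Measurable Ψ := by
      refine measurable_pi_lambda _ fun j => measurable_pi_lambda _ fun i => ?_
      simp only [hΨ]
      by_cases h : (j, i) ∈ T
      · simp only [dif_pos h]; exact measurable_pi_apply _
      · simp only [dif_neg h]; exact measurable_const
    set D : Set (Fin n → Fin d → ℝ) := ⋂ j ∈ u, (fun w : Fin n → Fin d → ℝ => w j) ⁻¹' B j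
      with hD
    have hDmeas : MeasurableSet D := by
      refine MeasurableSet.biInter u.countable_toSet fun j _ => ?_
      exact (measurable_pi_apply j) (hB j)
    have hTeq : (⋂ j ∈ u, (fun ω => ζ ω j) ⁻¹' B j)
        = (fun a (i : ↥T) => ζ a (i : Fin n × Fin d).1 (i : Fin n × Fin d).2) ⁻¹' (Ψ ⁻¹' D) := by
      ext ω
      simp only [Set.mem_iInter, Set.mem_preimage, hD, hΨ]
      refine forall_congr' fun j => ?_
      refine forall_congr' fun hj => ?_
      have heq : (fun i => if h : (j, i) ∈ T then ζ ω j i else 0) = ζ ω j := by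
        funext i
        have hji : (j, i) ∈ T := by simp [hT, hj]
        rw [dif_pos hji]
      rw [heq]
    rw [Finset.set_biInter_insert, Finset.prod_insert hk, ← IH, hSeq, hTeq,
      h2.measure_inter_preimage_eq_mul _ _ (hΦSmeas (hB k)) (hΨmeas hDmeas), ← hSeq, ← hTeq]

lemma mc_per_eps {Ω : Type*} [MeasurableSpace Ω] (P : Measure Ω) [IsProbabilityMeasure P]
    {d M : ℕ} (ζ : Ω → Fin (M + 1) → Fin d → ℝ)
    (hmeas : ∀ k i, Measurable fun ω => ζ ω k i)
    (hind : iIndepFun (fun (p : Fin (M + 1) × Fin d) ω => ζ ω p.1 p.2) P)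
    (G : Fin d → Measure ℝ) [∀ i, IsProbabilityMeasure (G i)]
    (hlaw : ∀ k i, Measure.map (fun ω => ζ ω k i) P = G i)
    (g : (Fin d → ℝ) → ℝ) (hg : Continuous g)
    (hatom : ∀ x : ℝ, P {ω | g (ζ ω 0) = x} = 0)
    (δ' : ℝ) (hδ'0 : 0 < δ') (hδ'1 : δ' < 1)
    (M₀ : ℕ) (hM₀pos : 1 ≤ M₀) (hM₀le : M₀ ≤ M)
    (hsum : ∑ j ∈ Finset.Icc (M - M₀ + 1) M, (M.choose j : ℝ) * (1 - δ') ^ j * δ' ^ (M - j)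
      ≤ δ') :
    ∃ Gset : Set Ω, MeasurableSet Gset ∧ P Gsetᶜ ≤ ENNReal.ofReal (2 * δ') ∧
      Gset ⊆ {ω | M₀ ≤ (Finset.univ.filter
        (fun k : Fin M => g (ζ ω 0) ≤ g (ζ ω k.succ))).card} := by
  classical
  have hgmeas : Measurable g := hg.measurable
  have blkmeas : ∀ k, Measurable fun ω => ζ ω k :=
    fun k => measurable_pi_lambda _ fun i => hmeas k i
  set X : Fin (M + 1) → Ω → ℝ := fun k ω => g (ζ ω k) with hX
  have hXmeas : ∀ k, Measurable (X k) := fun k => hgmeas.comp (blkmeas k)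
  have hblk : ∀ k, Measure.map (fun ω => ζ ω k) P = Measure.pi G :=
    mc_block_law P ζ hmeas hind G hlaw
  set ν : Measure ℝ := (Measure.pi G).map g with hν
  have hνprob : IsProbabilityMeasure ν := Measure.isProbabilityMeasure_map hgmeas.aemeasurable
  have hXlaw : ∀ k, Measure.map (X k) P = ν := by
    intro k
    rw [hν, ← hblk k, Measure.map_map hgmeas (blkmeas k)]
    rfl
  have hatomν : ∀ x : ℝ, ν {x} = 0 := by
    intro x
    rw [← hXlaw 0, Measure.map_apply (hXmeas 0) (measurableSet_singleton x)]
    have : X 0 ⁻¹' {x} = {ω | g (ζ ω 0) = x} := by ext ω; simp [hX]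
    rw [this]; exact hatom x
  -- the quantile q with ν (Iic q) = 1 - δ'
  set F := ProbabilityTheory.cdf ν with hF
  have hFmono : Monotone F := monotone_cdf ν
  have hcontF : Continuous F := by
    rw [continuous_iff_continuousAt]
    intro x
    rw [hFmono.continuousAt_iff_leftLim_eq_rightLim]
    have hr : Function.rightLim F x = F x := (cdf ν).rightLim_eq x
    have hsing : (cdf ν).measure {x} = 0 := by rw [measure_cdf]; exact hatomν x
    rw [StieltjesFunction.measure_singleton, ENNReal.ofReal_eq_zero] at hsing
    have hle : Function.leftLim F x ≤ F x := hFmono.leftLim_le le_rfl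
    rw [hr]
    exact le_antisymm hle (by linarith)
  obtain ⟨a, ha⟩ : ∃ a, F a < 1 - δ' :=
    ((tendsto_cdf_atBot ν).eventually_lt_const (by linarith)).exists
  obtain ⟨b, hb⟩ : ∃ b, 1 - δ' < F b :=
    ((tendsto_cdf_atTop ν).eventually_const_lt (by linarith)).exists
  obtain ⟨q, hq⟩ := intermediate_value_univ a b hcontF ⟨ha.le, hb.le⟩
  have hIic : ν (Set.Iic q) = ENNReal.ofReal (1 - δ') := by
    rw [← ofReal_cdf ν q]; exact congrArg _ hq
  have hIio : ν (Set.Iio q) = ENNReal.ofReal (1 - δ') := by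
    have hsplit : ν (Set.Iic q) = ν (Set.Iio q) + ν {q} := by
      rw [← Set.Iio_union_right, measure_union (by simp) (measurableSet_singleton q)]
    rw [hatomν q, add_zero] at hsplit
    rw [← hsplit, hIic]
  have h1sub : (1 : ℝ≥0∞) - ENNReal.ofReal (1 - δ') = ENNReal.ofReal δ' := by
    rw [← ENNReal.ofReal_one, ← ENNReal.ofReal_sub _ (by linarith : (0:ℝ) ≤ 1 - δ')]
    norm_num
  have hIci : ν (Set.Ici q) = ENNReal.ofReal δ' := by
    rw [← Set.compl_Iio, prob_compl_eq_one_sub measurableSet_Iio, hIio, h1sub]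
  have hIoi : ν (Set.Ioi q) = ENNReal.ofReal δ' := by
    rw [← Set.compl_Iic, prob_compl_eq_one_sub measurableSet_Iic, hIic, h1sub]
  -- probabilities of half-line events for each X k
  have hXset : ∀ k (I : Set ℝ), MeasurableSet I → P (X k ⁻¹' I) = ν I := by
    intro k I hI
    rw [← hXlaw k, Measure.map_apply (hXmeas k) hI]
  -- pattern events
  set emb : Fin M ↪ Fin (M + 1) := ⟨Fin.succ, Fin.succ_injective M⟩ with hemb
  set B : Finset (Fin M) → Fin (M + 1) → Set (Fin d → ℝ) := fun s j =>
    g ⁻¹' (if j ∈ s.map emb then Set.Iio q else Set.Ici q) with hB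
  have hBmeas : ∀ s j, MeasurableSet (B s j) := by
    intro s j
    refine hgmeas ?_
    split <;> [exact measurableSet_Iio; exact measurableSet_Ici]
  set e : Finset (Fin M) → Set Ω := fun s =>
    ⋂ j ∈ Finset.univ.map emb, (fun ω => ζ ω j) ⁻¹' B s j with he
  have hemeas : ∀ s, MeasurableSet (e s) := by
    intro s
    exact Set.Finite.measurableSet_biInter (Finset.finite_toSet _)
      fun j _ => (blkmeas j) (hBmeas s j)
  have hemem : ∀ s ω, ω ∈ e s ↔
      ∀ k : Fin M, if k ∈ s then X k.succ ω < q else q ≤ X k.succ ω := by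
    intro s ω
    simp only [he, Set.mem_iInter, Finset.mem_map, Set.mem_preimage]
    constructor
    · intro h k
      have := h k.succ ⟨k, Finset.mem_univ k, rfl⟩
      simp only [hB, Set.mem_preimage] at this
      by_cases hks : k ∈ s
      · have hmem : (k.succ : Fin (M+1)) ∈ s.map emb := Finset.mem_map_of_mem emb hks
        rw [if_pos hmem] at this
        rw [if_pos hks]
        exact this
      · have hmem : (k.succ : Fin (M+1)) ∉ s.map emb := by
          intro hcon
          obtain ⟨k', hk', hkk⟩ := Finset.mem_map.mp hcon
          have : k' = k := emb.injective hkk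
          exact hks (this ▸ hk')
        rw [if_neg hmem] at this
        rw [if_neg hks]
        exact this
    · rintro h j ⟨k, -, rfl⟩
      have := h k
      simp only [hB, Set.mem_preimage]
      by_cases hks : k ∈ s
      · rw [if_pos hks] at this
        rw [if_pos (Finset.mem_map_of_mem emb hks)]
        exact this
      · rw [if_neg hks] at this
        have hmem : (emb k : Fin (M+1)) ∉ s.map emb := by
          intro hcon
          obtain ⟨k', hk', hkk⟩ := Finset.mem_map.mp hcon
          exact hks ((emb.injective hkk) ▸ hk')
        rw [if_neg hmem]
        exact this
  have hefil : ∀ s ω, ω ∈ e s ↔ s = Finset.univ.filter (fun k => X k.succ ω < q) := by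
    intro s ω
    rw [hemem]
    constructor
    · intro h
      ext k
      simp only [Finset.mem_filter, Finset.mem_univ, true_and]
      constructor
      · intro hks; have := h k; rwa [if_pos hks] at this
      · intro hlt
        by_contra hks
        have := h k; rw [if_neg hks] at this
        exact absurd hlt (not_lt.mpr this)
    · rintro rfl k
      by_cases hk : X k.succ ω < q
      · rw [if_pos (by simp [hk])]; exact hk
      · rw [if_neg (by simp [hk])]; exact not_lt.mp hk
  -- probability of a pattern event
  have hepr : ∀ s : Finset (Fin M),
      P (e s) = ENNReal.ofReal ((1 - δ') ^ s.card * δ' ^ (M - s.card)) := by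
    intro s
    rw [he, mc_blocks_prod P ζ hmeas hind (B s) (hBmeas s), Finset.prod_map]
    have hfac : ∀ k : Fin M, P ((fun ω => ζ ω (emb k)) ⁻¹' B s (emb k))
        = if k ∈ s then ENNReal.ofReal (1 - δ') else ENNReal.ofReal δ' := by
      intro k
      have hpre : (fun ω => ζ ω (emb k)) ⁻¹' B s (emb k)
          = X (emb k) ⁻¹' (if (emb k) ∈ s.map emb then Set.Iio q else Set.Ici q) := by
        ext ω; simp [hB, hX]
      rw [hpre]
      by_cases hks : k ∈ s
      · rw [if_pos (Finset.mem_map_of_mem emb hks), if_pos hks,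
          hXset _ _ measurableSet_Iio, hIio]
      · have hmem : (emb k : Fin (M+1)) ∉ s.map emb := by
          intro hcon
          obtain ⟨k', hk', hkk⟩ := Finset.mem_map.mp hcon
          exact hks ((emb.injective hkk) ▸ hk')
        rw [if_neg hmem, if_neg hks, hXset _ _ measurableSet_Ici, hIci]
    calc ∏ k : Fin M, P ((fun ω => ζ ω (emb k)) ⁻¹' B s (emb k))
        = ∏ k : Fin M, (if k ∈ s then ENNReal.ofReal (1 - δ') else ENNReal.ofReal δ') :=
          Finset.prod_congr rfl fun k _ => hfac k
      _ = ENNReal.ofReal (1 - δ') ^ s.card * ENNReal.ofReal δ' ^ (M - s.card) := by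
          rw [Finset.prod_ite, Finset.prod_const, Finset.prod_const, Finset.filter_univ_mem]
          congr 2
          have : Finset.filter (fun k => ¬ k ∈ s) Finset.univ = Finset.univ \ s := by
            ext k; simp
          rw [this, Finset.card_sdiff_of_subset (Finset.subset_univ s), Finset.card_univ,
            Fintype.card_fin]
      _ = ENNReal.ofReal ((1 - δ') ^ s.card * δ' ^ (M - s.card)) := by
          rw [← ENNReal.ofReal_pow (by linarith), ← ENNReal.ofReal_pow hδ'0.le,
            ← ENNReal.ofReal_mul (pow_nonneg (by linarith) _)]
  -- the bad count event
  set t : ℕ := M - M₀ + 1 with ht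
  set 𝒮 : Finset (Finset (Fin M)) :=
    Finset.univ.powerset.filter (fun s => t ≤ s.card) with h𝒮
  set Bc : Set Ω := {ω | ¬ M₀ ≤ (Finset.univ.filter (fun k : Fin M => q ≤ X k.succ ω)).card}
    with hBc
  have hcount : ∀ ω, (Finset.univ.filter (fun k : Fin M => q ≤ X k.succ ω)).card
      + (Finset.univ.filter (fun k : Fin M => X k.succ ω < q)).card = M := by
    intro ω
    have h1 : Finset.univ.filter (fun k : Fin M => X k.succ ω < q)
        = Finset.univ.filter (fun k => ¬ q ≤ X k.succ ω) := by
      ext k; simp [not_le]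
    rw [h1, Finset.card_filter_add_card_filter_not, Finset.card_univ, Fintype.card_fin]
  have hBcdec : Bc = ⋃ s ∈ 𝒮, e s := by
    ext ω
    simp only [hBc, Set.mem_setOf_eq, Set.mem_iUnion, exists_prop]
    constructor
    · intro hno
      refine ⟨Finset.univ.filter (fun k => X k.succ ω < q), ?_, (hefil _ ω).mpr rfl⟩
      simp only [h𝒮, Finset.mem_filter, Finset.mem_powerset]
      refine ⟨Finset.subset_univ _, ?_⟩
      have := hcount ω
      omega
    · rintro ⟨s, hs, hes⟩
      have hcard := (Finset.mem_filter.mp hs).2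
      have hseq := (hefil s ω).mp hes
      have := hcount ω
      rw [← hseq] at this
      omega
  have hBcmeas : MeasurableSet Bc := by
    rw [hBcdec]
    exact Set.Finite.measurableSet_biUnion (Finset.finite_toSet _) fun s _ => hemeas s
  have hPBc : P Bc ≤ ENNReal.ofReal δ' := by
    rw [hBcdec, measure_biUnion_finset ?disj (fun s _ => hemeas s)]
    case disj =>
      rintro s hs s' hs' hne
      refine Set.disjoint_left.mpr fun ω hω hω' => ?_
      exact hne (((hefil s ω).mp hω).trans ((hefil s' ω).mp hω').symm)
    have hstep : ∑ s ∈ 𝒮, P (e s)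
        = ∑ j ∈ Finset.Icc t M, (M.choose j) •
            ENNReal.ofReal ((1 - δ') ^ j * δ' ^ (M - j)) := by
      rw [← Finset.sum_fiberwise_of_maps_to (g := Finset.card) (t := Finset.Icc t M) ?hmaps]
      case hmaps =>
        intro s hs
        simp only [h𝒮, Finset.mem_filter, Finset.mem_powerset] at hs
        simp only [Finset.mem_Icc]
        exact ⟨hs.2, le_trans (Finset.card_le_card (Finset.subset_univ s))
          (by simp [Finset.card_univ])⟩
      refine Finset.sum_congr rfl fun j hj => ?_
      have hfib : 𝒮.filter (fun s => s.card = j) = Finset.powersetCard j Finset.univ := by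
        ext s
        simp only [h𝒮, Finset.mem_filter, Finset.mem_powerset, Finset.mem_powersetCard_univ]
        simp only [Finset.mem_Icc] at hj
        constructor
        · rintro ⟨⟨-, -⟩, h2⟩; exact h2
        · intro h; exact ⟨⟨Finset.subset_univ s, by omega⟩, h⟩
      rw [hfib]
      have : ∀ s ∈ Finset.powersetCard j (Finset.univ : Finset (Fin M)),
          P (e s) = ENNReal.ofReal ((1 - δ') ^ j * δ' ^ (M - j)) := by
        intro s hs
        rw [hepr s, Finset.mem_powersetCard_univ.mp hs]
      rw [Finset.sum_congr rfl this, Finset.sum_const, Finset.card_powersetCard,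
        Finset.card_univ, Fintype.card_fin]
    rw [hstep]
    have hofsum : ∑ j ∈ Finset.Icc t M, (M.choose j) •
          ENNReal.ofReal ((1 - δ') ^ j * δ' ^ (M - j))
        = ENNReal.ofReal (∑ j ∈ Finset.Icc t M,
            (M.choose j : ℝ) * (1 - δ') ^ j * δ' ^ (M - j)) := by
      rw [ENNReal.ofReal_sum_of_nonneg]
      · refine Finset.sum_congr rfl fun j _ => ?_
        rw [nsmul_eq_mul, ← ENNReal.ofReal_natCast (M.choose j),
          ← ENNReal.ofReal_mul (by positivity), mul_assoc]
      · intro j _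
        have h1 : (0:ℝ) ≤ 1 - δ' := by linarith
        positivity
    rw [hofsum]
    exact ENNReal.ofReal_le_ofReal hsum
  -- the bad tail event
  set A : Set Ω := {ω | q < X 0 ω} with hA
  have hAmeas : MeasurableSet A := (hXmeas 0) measurableSet_Ioi
  have hPA : P A = ENNReal.ofReal δ' := by
    have : A = X 0 ⁻¹' Set.Ioi q := rfl
    rw [this, hXset 0 _ measurableSet_Ioi, hIoi]
  -- assemble
  refine ⟨Aᶜ ∩ Bcᶜ, (hAmeas.compl).inter hBcmeas.compl, ?_, ?_⟩
  · have hcompl : (Aᶜ ∩ Bcᶜ)ᶜ = A ∪ Bc := by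
      rw [Set.compl_inter, compl_compl, compl_compl]
    rw [hcompl]
    calc P (A ∪ Bc) ≤ P A + P Bc := measure_union_le A Bc
      _ ≤ ENNReal.ofReal δ' + ENNReal.ofReal δ' := by
          rw [hPA]; exact add_le_add_right hPBc _
      _ = ENNReal.ofReal (2 * δ') := by
          rw [← ENNReal.ofReal_add hδ'0.le hδ'0.le]; ring_nf
  · rintro ω ⟨hωA, hωB⟩
    simp only [hA, Set.mem_compl_iff, Set.mem_setOf_eq, not_lt] at hωA
    simp only [hBc, Set.mem_compl_iff, Set.mem_setOf_eq, not_not] at hωB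
    simp only [Set.mem_setOf_eq]
    refine le_trans hωB (Finset.card_le_card ?_)
    exact Finset.monotone_filter_right _ fun k _ hk => le_trans hωA hk



set_option maxHeartbeats 1000000 in
/-- **Validity of the Monte-Carlo estimate of the Gaussian supremum quantile.**
With probability at least 1−δ (jointly over the real noise η = ζ(0) and the M
Monte-Carlo copies ζ(1),…,ζ(M)), simultaneously for every ε ∈ E the supremum
sup_{Δ∈C(ε)} Δᵀη is bounded by the (M−M₀+1)-th order statistic of the
Monte-Carlo suprema X_k(ε) = sup_{Δ∈C(ε)} Δᵀζ(k); equivalently, at least M₀ of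
the M Monte-Carlo suprema are ≥ sup_{Δ∈C(ε)} Δᵀη. -/
theorem monte_carlo_order_statistic_valid
    {Ω : Type*} [MeasurableSpace Ω] (P : Measure Ω) [IsProbabilityMeasure P]
    (d : ℕ) (hd : 0 < d)
    (N : Fin d → ℕ) (hN : ∀ i, 1 ≤ N i)
    (σ : Fin d → ℝ) (hσ : ∀ i, 0 < σ i)
    -- the reference policy
    (μhat : Fin d → ℝ)
    (hμhat : ∀ i, μhat i = ((N i : ℝ) / (σ i) ^ 2) / (∑ j, (N j : ℝ) / (σ j) ^ 2))
    -- the trust region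
    (C : ℝ → Set (Fin d → ℝ))
    (hC : ∀ ε, C ε = {Δ | (∀ i, 0 ≤ Δ i + μhat i) ∧ (∑ i, (Δ i + μhat i)) = 1
      ∧ ∑ i, (Δ i) ^ 2 * (σ i) ^ 2 / (N i : ℝ) ≤ ε ^ 2})
    -- ζ(0) is the real noise vector η and ζ(1),…,ζ(M) are the Monte-Carlo copies;
    -- all (M+1)·d coordinates are jointly independent, with ζ(k)_i ~ N(0, σ_i²/N_i)
    (M : ℕ) (hM : 0 < M)
    (ζ : Ω → Fin (M + 1) → Fin d → ℝ)
    (hζmeas : ∀ k i, Measurable fun ω => ζ ω k i)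
    (hζind : iIndepFun
      (fun (p : Fin (M + 1) × Fin d) ω => ζ ω p.1 p.2) P)
    (hζlaw : ∀ k i, Measure.map (fun ω => ζ ω k i) P
      = gaussianReal 0 (Real.toNNReal ((σ i) ^ 2 / (N i : ℝ))))
    -- the finite set of positive radii; each X(ε) = sup_{Δ∈C(ε)} Δᵀη has a
    -- continuous (atomless) distribution function
    (E : Finset ℝ) (hE : ∀ ε ∈ E, 0 < ε) (hEne : E.Nonempty)
    (hcont : ∀ ε ∈ E, ∀ x : ℝ,
      P {ω | sSup ((fun Δ => ∑ i, Δ i * ζ ω 0 i) '' C ε) = x} = 0)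
    (δ : ℝ) (hδ : 0 < δ) (hδ1 : δ < 1)
    -- M₀ = Q(M, δ/(2|E|)) is the maximal integer such that the binomial tail sum
    -- Σ_{j=M−M₀+1}^M C(M,j)(1−δ')^j δ'^{M−j} is at most δ' = δ/(2|E|); assume M₀ ≥ 1
    (M₀ : ℕ) (hM₀pos : 1 ≤ M₀) (hM₀le : M₀ ≤ M)
    (hM₀sum : ∑ j ∈ Finset.Icc (M - M₀ + 1) M, (M.choose j : ℝ)
        * (1 - δ / (2 * E.card)) ^ j * (δ / (2 * E.card)) ^ (M - j)
      ≤ δ / (2 * E.card))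
    (hM₀max : ∀ m' : ℕ, m' ≤ M →
      (∑ j ∈ Finset.Icc (M - m' + 1) M, (M.choose j : ℝ)
          * (1 - δ / (2 * E.card)) ^ j * (δ / (2 * E.card)) ^ (M - j)
        ≤ δ / (2 * E.card)) → m' ≤ M₀) :
    ENNReal.ofReal (1 - δ) ≤
      P {ω | ∀ ε ∈ E,
        -- at least M₀ of the Monte-Carlo suprema are ≥ sup_{Δ∈C(ε)} Δᵀη, i.e.
        -- sup_{Δ∈C(ε)} Δᵀη ≤ X_{(M−M₀+1)}(ε)
        M₀ ≤ (Finset.univ.filter (fun k : Fin M =>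
          sSup ((fun Δ => ∑ i, Δ i * ζ ω 0 i) '' C ε)
            ≤ sSup ((fun Δ => ∑ i, Δ i * ζ ω k.succ i) '' C ε))).card} := by
  classical
  set δ' : ℝ := δ / (2 * E.card) with hδ'
  have hcard : 0 < E.card := Finset.card_pos.mpr hEne
  have hcardR : (0:ℝ) < E.card := by exact_mod_cast hcard
  have hcardR1 : (1:ℝ) ≤ E.card := by exact_mod_cast hcard
  have hδ'0 : 0 < δ' := by rw [hδ']; positivity
  have hδ'1 : δ' < 1 := by
    rw [hδ', div_lt_one (by positivity)]
    nlinarith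
  -- basic facts about the reference policy
  haveI : Nonempty (Fin d) := Fin.pos_iff_nonempty.mp hd
  have hSpos : 0 < ∑ j, (N j : ℝ) / (σ j) ^ 2 := by
    refine Finset.sum_pos (fun j _ => ?_) Finset.univ_nonempty
    have h1 : (1:ℝ) ≤ N j := by exact_mod_cast hN j
    have h2 := hσ j
    positivity
  have hμ0 : ∀ i, 0 ≤ μhat i := by
    intro i
    rw [hμhat i]
    have h1 : (0:ℝ) ≤ N i := Nat.cast_nonneg _
    have h2 := hσ i
    positivity
  have hμsum : ∑ i, μhat i = 1 := by
    have : ∑ i, μhat i = (∑ i, (N i : ℝ) / (σ i) ^ 2) / (∑ j, (N j : ℝ) / (σ j) ^ 2) := by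
      rw [Finset.sum_div]
      exact Finset.sum_congr rfl fun i _ => hμhat i
    rw [this, div_self hSpos.ne']
  have hμ1 : ∀ i, μhat i ≤ 1 := by
    intro i
    calc μhat i ≤ ∑ j, μhat j :=
          Finset.single_le_sum (fun j _ => hμ0 j) (Finset.mem_univ i)
      _ = 1 := hμsum
  -- per-ε good events
  have key : ∀ ε ∈ E, ∃ Gs : Set Ω, MeasurableSet Gs ∧ P Gsᶜ ≤ ENNReal.ofReal (2 * δ') ∧
      Gs ⊆ {ω | M₀ ≤ (Finset.univ.filter (fun k : Fin M =>
        sSup ((fun Δ => ∑ i, Δ i * ζ ω 0 i) '' C ε)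
          ≤ sSup ((fun Δ => ∑ i, Δ i * ζ ω k.succ i) '' C ε))).card} := by
    intro ε hε
    have hne : (C ε).Nonempty := by
      refine ⟨0, ?_⟩
      rw [hC ε]
      refine ⟨fun i => by simpa using hμ0 i, by simpa using hμsum, ?_⟩
      have : ∀ i : Fin d, ((0 : Fin d → ℝ) i) ^ 2 * (σ i) ^ 2 / (N i : ℝ) = 0 := by
        intro i; simp
      rw [Finset.sum_congr rfl fun i _ => this i]
      simp [sq_nonneg]
    have hbd : ∀ Δ ∈ C ε, ∀ i, |Δ i| ≤ 1 := by
      intro Δ hΔ i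
      rw [hC ε] at hΔ
      obtain ⟨h1, h2, -⟩ := hΔ
      have hle : Δ i + μhat i ≤ 1 := by
        calc Δ i + μhat i ≤ ∑ j, (Δ j + μhat j) :=
              Finset.single_le_sum (fun j _ => h1 j) (Finset.mem_univ i)
          _ = 1 := h2
      have hi0 := h1 i
      have := hμ0 i
      have := hμ1 i
      rw [abs_le]
      constructor <;> linarith
    have hg := mc_sup_continuous (C ε) hne hbd
    obtain ⟨Gs, h1, h2, h3⟩ := mc_per_eps P ζ hζmeas hζind
      (fun i => gaussianReal 0 (Real.toNNReal ((σ i) ^ 2 / (N i : ℝ)))) hζlaw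
      (fun η => sSup ((fun Δ => ∑ i, Δ i * η i) '' C ε)) hg
      (hcont ε hε) δ' hδ'0 hδ'1 M₀ hM₀pos hM₀le hM₀sum
    exact ⟨Gs, h1, h2, h3⟩
  choose Gs hGmeas hGbad hGsub using key
  set Gs' : ℝ → Set Ω := fun ε => if h : ε ∈ E then Gs ε h else Set.univ with hGs'
  have hGs'meas : ∀ ε, MeasurableSet (Gs' ε) := by
    intro ε
    by_cases h : ε ∈ E
    · simpa only [hGs', dif_pos h] using hGmeas ε h
    · simpa only [hGs', dif_neg h] using MeasurableSet.univ
  set I : Set Ω := ⋂ ε ∈ E, Gs' ε with hI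
  have hImeas : MeasurableSet I :=
    Set.Finite.measurableSet_biInter (Finset.finite_toSet E) fun ε _ => hGs'meas ε
  have hIsub : I ⊆ {ω | ∀ ε ∈ E,
      M₀ ≤ (Finset.univ.filter (fun k : Fin M =>
        sSup ((fun Δ => ∑ i, Δ i * ζ ω 0 i) '' C ε)
          ≤ sSup ((fun Δ => ∑ i, Δ i * ζ ω k.succ i) '' C ε))).card} := by
    intro ω hω ε hε
    have hωG : ω ∈ Gs' ε := by
      rw [hI] at hω
      simp only [Set.mem_iInter] at hω
      exact hω ε hε
    simp only [hGs', dif_pos hε] at hωG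
    exact hGsub ε hε hωG
  have hIbad : P Iᶜ ≤ ENNReal.ofReal δ := by
    have hcompl : Iᶜ = ⋃ ε ∈ E, (Gs' ε)ᶜ := by
      rw [hI]
      simp [Set.compl_iInter]
    rw [hcompl]
    calc P (⋃ ε ∈ E, (Gs' ε)ᶜ) ≤ ∑ ε ∈ E, P ((Gs' ε)ᶜ) :=
          measure_biUnion_finset_le E _
      _ ≤ ∑ _ε ∈ E, ENNReal.ofReal (2 * δ') := by
          refine Finset.sum_le_sum fun ε hε => ?_
          simpa only [hGs', dif_pos hε] using hGbad ε hε
      _ = E.card • ENNReal.ofReal (2 * δ') := by rw [Finset.sum_const]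
      _ = ENNReal.ofReal (E.card * (2 * δ')) := by
          rw [nsmul_eq_mul, ← ENNReal.ofReal_natCast E.card,
            ← ENNReal.ofReal_mul (Nat.cast_nonneg _)]
      _ = ENNReal.ofReal δ := by
          congr 1
          rw [hδ']
          field_simp
  have hPI : ENNReal.ofReal (1 - δ) ≤ P I := by
    have h1 : P I = 1 - P Iᶜ := by
      rw [← compl_compl I] 
      rw [prob_compl_eq_one_sub hImeas.compl, compl_compl]
    rw [h1, ENNReal.ofReal_sub 1 hδ.le, ENNReal.ofReal_one]
    exact tsub_le_tsub_left hIbad _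
  exact le_trans hPI (measure_mono hIsub)
end
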